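/- arXiv:2502.09377 — 9 statements merged into one kernel-verified Lean document; each statement's English description precedes it below -/
import Mathlib

section
/- For every positive integer n there exists a fair division instance with n agents, m = n^n goods, and monotone normalized valuations, in which μ_i^n(M) = 1 for every agent i, and such that every allocation with copies (A_1,…,A_n) satisfying v_i(A_i) ≥ μ_i^n(M) for all agents i has total number of copies Σ_i |A_i| − |⋃_i A_i| at least (n−1)^n = ((n−1)/n)^n · m, and moreover contains some good that belongs to all n bundles (i.e., is copied n−1 times). -/
/-!
Goods are the functions `g : Fin n → Fin n`, and agent `i` is satisfied exactly by the bundles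
containing a whole fibre `{g | g i = a}`. Partitioning by the `i`-th coordinate gives every
agent an MMS of `1`, so an MMS allocation gives each agent `i` a fibre `{g | g i = j i}`: the good
`j` lies in all of them. These `n` fibres have `n ^ n` elements in total but cover only the
`n ^ n - (n - 1) ^ n` functions agreeing with `j` somewhere, and the number of copies can only
grow when the bundles are enlarged.
-/

open Finset

noncomputable def mms {G : Type*} (v : Finset G → ℝ) (d : ℕ) (S : Finset G) : ℝ :=
  ⨆ P : G → Fin d, ⨅ j : Fin d, v (S.filter fun g => P g = j)

/-- The number of copies `∑ i, #(A i) - #(⋃ i, A i)` is monotone in the bundles. -/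
theorem card_biUnion_add_sum_card_le_of_subset {ι α : Type*} [DecidableEq α] (s : Finset ι)
    {A B : ι → Finset α} (hBA : ∀ i ∈ s, B i ⊆ A i) :
    #(s.biUnion A) + ∑ i ∈ s, #(B i) ≤ #(s.biUnion B) + ∑ i ∈ s, #(A i) := by
  have hcover : s.biUnion A ⊆ s.biUnion B ∪ s.biUnion fun i => A i \ B i := by
    intro g hg
    obtain ⟨i, hi, hgA⟩ := mem_biUnion.1 hg
    by_cases hgB : g ∈ B i
    · exact mem_union_left _ (mem_biUnion.2 ⟨i, hi, hgB⟩)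
    · exact mem_union_right _ (mem_biUnion.2 ⟨i, hi, mem_sdiff.2 ⟨hgA, hgB⟩⟩)
  have hsplit : ∑ i ∈ s, #(A i) = ∑ i ∈ s, #(A i \ B i) + ∑ i ∈ s, #(B i) := by
    rw [← sum_add_distrib]
    exact sum_congr rfl fun i hi => (card_sdiff_add_card_eq_card (hBA i hi)).symm
  calc #(s.biUnion A) + ∑ i ∈ s, #(B i)
      ≤ #(s.biUnion B) + #(s.biUnion fun i => A i \ B i) + ∑ i ∈ s, #(B i) := by
        gcongr
        exact (card_le_card hcover).trans (card_union_le _ _)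
    _ ≤ #(s.biUnion B) + ∑ i ∈ s, #(A i \ B i) + ∑ i ∈ s, #(B i) := by
        gcongr
        exact card_biUnion_le
    _ = #(s.biUnion B) + ∑ i ∈ s, #(A i) := by rw [hsplit, add_assoc]

theorem mms_le_of_forall_le {G : Type*} {v : Finset G → ℝ} {d : ℕ} (hd : 0 < d) (S : Finset G)
    {c : ℝ} (hv : ∀ T, v T ≤ c) : mms v d S ≤ c := by
  have : Nonempty (Fin d) := ⟨⟨0, hd⟩⟩
  exact ciSup_le fun P => (ciInf_le (Set.finite_range _).bddBelow ⟨0, hd⟩).trans (hv _)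

theorem le_mms_of_forall_le {G : Type*} [Finite G] {v : Finset G → ℝ} {d : ℕ} (hd : 0 < d)
    {S : Finset G} {c : ℝ} (P : G → Fin d) (hP : ∀ j, c ≤ v (S.filter fun g => P g = j)) :
    c ≤ mms v d S := by
  have : Nonempty (Fin d) := ⟨⟨0, hd⟩⟩
  exact le_ciSup_of_le (Set.finite_range _).bddAbove P (le_ciInf hP)

section Fibre

variable {ι α : Type*} [Fintype ι] [DecidableEq ι] [Fintype α] [DecidableEq α]

def fibre (i : ι) (a : α) : Finset (ι → α) := {g | g i = a}

@[simp]
theorem mem_fibre {i : ι} {a : α} {g : ι → α} : g ∈ fibre i a ↔ g i = a := by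
  simp [fibre]

theorem card_fibre (i : ι) (a : α) : #(fibre i a) = Fintype.card α ^ (Fintype.card ι - 1) := by
  have h := Fintype.card_filter_piFinset_const_eq_of_mem (univ : Finset α) i (mem_univ a)
  rwa [Fintype.piFinset_univ, card_univ] at h

theorem compl_biUnion_fibre (j : ι → α) :
    (univ.biUnion fun i => fibre i (j i))ᶜ = Fintype.piFinset fun i => {j i}ᶜ := by
  ext g
  simp

theorem card_biUnion_fibre_add (j : ι → α) :
    #(univ.biUnion fun i => fibre i (j i)) + (Fintype.card α - 1) ^ Fintype.card ι =
      Fintype.card α ^ Fintype.card ι := by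
  have hcompl : #(univ.biUnion fun i => fibre i (j i))ᶜ = (Fintype.card α - 1) ^ Fintype.card ι := by
    simp [compl_biUnion_fibre, card_compl]
  rw [← hcompl, card_add_card_compl, Fintype.card_fun]

open scoped Classical in
noncomputable def fibreValuation (i : ι) (S : Finset (ι → α)) : ℝ :=
  if ∃ a, fibre i a ⊆ S then 1 else 0

theorem fibreValuation_empty (i : ι) : fibreValuation i (∅ : Finset (ι → α)) = 0 := by
  refine if_neg fun ⟨a, ha⟩ => ?_
  simpa using ha (mem_fibre.2 rfl : (fun _ => a) ∈ fibre i a)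

theorem fibreValuation_nonneg (i : ι) (S : Finset (ι → α)) : 0 ≤ fibreValuation i S := by
  unfold fibreValuation
  split_ifs <;> norm_num

theorem fibreValuation_le_one (i : ι) (S : Finset (ι → α)) : fibreValuation i S ≤ 1 := by
  unfold fibreValuation
  split_ifs <;> norm_num

theorem fibreValuation_mono (i : ι) {S T : Finset (ι → α)} (hST : S ⊆ T) :
    fibreValuation i S ≤ fibreValuation i T := by
  unfold fibreValuation
  split_ifs with hS hT
  · rfl
  · exact absurd (hS.imp fun a ha => ha.trans hST) hT
  · norm_num
  · rfl

theorem one_le_fibreValuation_iff {i : ι} {S : Finset (ι → α)} :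
    1 ≤ fibreValuation i S ↔ ∃ a, fibre i a ⊆ S := by
  unfold fibreValuation
  split_ifs with h <;> simp [h]

theorem mms_fibreValuation {d : ℕ} (hd : 0 < d) (i : ι) :
    mms (fibreValuation (α := Fin d) i) d univ = 1 :=
  le_antisymm (mms_le_of_forall_le hd _ (fibreValuation_le_one i))
    (le_mms_of_forall_le hd (fun g => g i) fun j =>
      one_le_fibreValuation_iff.2 ⟨j, subset_refl _⟩)

end Fibre

/-- For every positive `n` there is an instance with `n` agents, `n^n` goods,
monotone normalized (nonnegative) valuations, each agent's MMS equal to `1`, such that any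
allocation with copies giving each agent at least her MMS has total number of copies
at least `(n-1)^n`, and some good belongs to all `n` bundles. -/
theorem stmt0 (n : ℕ) (hn : 0 < n) :
    ∃ (G : Type) (_ : Fintype G) (_ : DecidableEq G) (v : Fin n → Finset G → ℝ),
      Fintype.card G = n ^ n ∧
      (∀ i, v i ∅ = 0) ∧
      (∀ i S, 0 ≤ v i S) ∧
      (∀ i S T, S ⊆ T → v i S ≤ v i T) ∧
      (∀ i, mms (v i) n Finset.univ = 1) ∧
      (∀ A : Fin n → Finset G,
        (∀ i, mms (v i) n Finset.univ ≤ v i (A i)) →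
          (Finset.univ.biUnion A).card + (n - 1) ^ n ≤ ∑ i, (A i).card ∧
          ∃ g : G, ∀ i, g ∈ A i) := by
  refine ⟨Fin n → Fin n, inferInstance, inferInstance, fibreValuation, by simp,
    fibreValuation_empty, fibreValuation_nonneg, fun i _ _ => fibreValuation_mono i,
    fun i => mms_fibreValuation hn i, fun A hA => ?_⟩
  have hfibre : ∀ i, ∃ a, fibre i a ⊆ A i := fun i =>
    one_le_fibreValuation_iff.1 ((mms_fibreValuation hn i).symm.le.trans (hA i))
  choose j hj using hfibre
  refine ⟨?_, j, fun i => hj i (mem_fibre.2 rfl)⟩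
  have hcopies := card_biUnion_add_sum_card_le_of_subset univ fun i _ => hj i
  have hcover := card_biUnion_fibre_add j
  have hsum : ∑ i, #(fibre i (j i)) = n ^ n := by
    simp only [card_fibre, sum_const, card_univ, Fintype.card_fin, smul_eq_mul]
    rw [← pow_succ', Nat.sub_add_cancel hn]
  simp only [Fintype.card_fin] at hcover
  omega
end

section
/- For every fair division instance with n agents, m goods, and monotone normalized valuations, there exists an allocation with copies (A_1,…,A_n) such that v_i(A_i) ≥ μ_i^n(M) for every agent i and the total number of copies Σ_i |A_i| − |⋃_i A_i| is at most ((n−1)/n)^n · m. -/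
/-!
Every agent fixes a partition of the goods into `n` bundles attaining her maximin share and
receives one of her own bundles, chosen independently and uniformly at random. A good lies in
exactly one bundle of each agent, so it is received by each agent with probability `1/n` and by
nobody with probability `(1 - 1/n)^n`. The expected total bundle size is therefore `m` and the
expected size of the union `m (1 - (1 - 1/n)^n)`, so the expected number of copies is
`((n-1)/n)^n m`, and some choice does no worse than the average. The expectation is computed
by counting over all `n^n` choices.
-/

open Finset

theorem exists_partition_forall_mms_le {G : Type*} [Finite G] (v : Finset G → ℝ) (d : ℕ)
    [NeZero d] (S : Finset G) :
    ∃ P : G → Fin d, ∀ j, mms v d S ≤ v (S.filter fun g => P g = j) := by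
  obtain ⟨P, hP⟩ := Finite.exists_max fun P : G → Fin d => ⨅ j, v (S.filter fun g => P g = j)
  exact ⟨P, fun j => (ciSup_le hP).trans (ciInf_le (Finite.bddBelow_range _) j)⟩

theorem pow_mul_natCast_div_self {k : ℝ} (hk : k ≠ 0) (a : ℕ) :
    k ^ a * (a / k) = a * k ^ (a - 1) := by
  cases a with
  | zero => simp
  | succ a => rw [pow_succ]; field_simp; simp

section BundleSelection
variable {ι κ : Type*} [Fintype ι] [Fintype κ] [DecidableEq ι] [DecidableEq κ]

theorem card_filter_pi_apply_eq (i : ι) (k : κ) :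
    #{c : ι → κ | c i = k} = Fintype.card κ ^ (Fintype.card ι - 1) := by
  simpa [Fintype.piFinset_univ] using
    Fintype.card_filter_piFinset_const_eq_of_mem (univ : Finset κ) i (mem_univ k)

theorem card_filter_pi_forall_apply_ne (q : ι → κ) :
    #{c : ι → κ | ∀ i, c i ≠ q i} = (Fintype.card κ - 1) ^ Fintype.card ι := by
  have : ({c : ι → κ | ∀ i, c i ≠ q i} : Finset (ι → κ)) =
      Fintype.piFinset fun i => univ.erase (q i) := by
    ext c; simp
  simp [this, Fintype.card_piFinset, card_erase_of_mem]

theorem card_filter_pi_exists_apply_eq (q : ι → κ) :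
    #{c : ι → κ | ∃ i, c i = q i} =
      Fintype.card κ ^ Fintype.card ι - (Fintype.card κ - 1) ^ Fintype.card ι := by
  have h := card_filter_add_card_filter_not (s := (univ : Finset (ι → κ))) fun c => ∃ i, c i = q i
  simp only [not_exists, ← ne_eq, card_filter_pi_forall_apply_ne, card_univ,
    Fintype.card_fun] at h
  omega

variable {G : Type*} [Fintype G]

def bundleSelection (P : ι → G → κ) (c : ι → κ) (i : ι) : Finset G := {g | P i g = c i}

theorem sum_sum_card_bundleSelection (P : ι → G → κ) :
    ∑ c, ∑ i, #(bundleSelection P c i) =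
      Fintype.card ι * Fintype.card G * Fintype.card κ ^ (Fintype.card ι - 1) := by
  simp_rw [bundleSelection, card_filter]
  rw [sum_comm]
  simp_rw [sum_comm (s := (univ : Finset (ι → κ))), ← card_filter, eq_comm (a := P _ _),
    card_filter_pi_apply_eq]
  simp [mul_assoc]

theorem sum_card_biUnion_bundleSelection [DecidableEq G] (P : ι → G → κ) :
    ∑ c, #(univ.biUnion (bundleSelection P c)) =
      Fintype.card G *
        (Fintype.card κ ^ Fintype.card ι - (Fintype.card κ - 1) ^ Fintype.card ι) := by
  have h (c : ι → κ) :
      univ.biUnion (bundleSelection P c) = ({g | ∃ i, c i = P i g} : Finset G) := by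
    ext g; simp [bundleSelection, eq_comm]
  simp_rw [h, card_filter]
  rw [sum_comm]
  simp_rw [← card_filter, card_filter_pi_exists_apply_eq (fun i => P i _)]
  simp

/- `((k-1)/k)^a + a/k - 1` is the expected number of copies of one good when each of `a` agents
receives one of her `k` bundles uniformly at random. -/
theorem exists_bundleSelection_copies_le [DecidableEq G] [Nonempty κ] (P : ι → G → κ) :
    ∃ c, (∑ i, (#(bundleSelection P c i) : ℝ)) - #(univ.biUnion (bundleSelection P c)) ≤
      ((((Fintype.card κ : ℝ) - 1) / Fintype.card κ) ^ Fintype.card ι +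
        Fintype.card ι / Fintype.card κ - 1) * Fintype.card G := by
  have hk : (Fintype.card κ : ℝ) ≠ 0 := Nat.cast_ne_zero.2 Fintype.card_ne_zero
  have hsizes : ∑ c, ∑ i, (#(bundleSelection P c i) : ℝ) =
      Fintype.card ι * Fintype.card G * (Fintype.card κ : ℝ) ^ (Fintype.card ι - 1) := by
    exact_mod_cast sum_sum_card_bundleSelection P
  have hunions : ∑ c, (#(univ.biUnion (bundleSelection P c)) : ℝ) =
      Fintype.card G * ((Fintype.card κ : ℝ) ^ Fintype.card ι -
        ((Fintype.card κ : ℝ) - 1) ^ Fintype.card ι) := by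
    rw [← Nat.cast_pred Fintype.card_pos, ← Nat.cast_pow, ← Nat.cast_pow,
      ← Nat.cast_sub (Nat.pow_le_pow_left (Nat.sub_le _ 1) _)]
    exact_mod_cast sum_card_biUnion_bundleSelection P
  have hpow : (Fintype.card κ : ℝ) ^ Fintype.card ι * (((Fintype.card κ : ℝ) - 1) /
      Fintype.card κ) ^ Fintype.card ι = ((Fintype.card κ : ℝ) - 1) ^ Fintype.card ι := by
    rw [← mul_pow, mul_div_cancel₀ _ hk]
  by_contra! hgt
  have hsum := sum_lt_sum_of_nonempty univ_nonempty fun c _ => hgt c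
  rw [sum_sub_distrib, hsizes, hunions, sum_const, card_univ, Fintype.card_fun,
    nsmul_eq_mul] at hsum
  push_cast at hsum
  linarith [congrArg (· * (Fintype.card G : ℝ)) hpow,
    congrArg (· * (Fintype.card G : ℝ)) (pow_mul_natCast_div_self hk (Fintype.card ι))]

end BundleSelection

theorem stmt1_general {G : Type*} [Fintype G] [DecidableEq G] (n : ℕ) (hn : 0 < n)
    (v : Fin n → Finset G → ℝ) :
    ∃ A : Fin n → Finset G,
      (∀ i, mms (v i) n Finset.univ ≤ v i (A i)) ∧
      ((∑ i, ((A i).card : ℝ)) - ((Finset.univ.biUnion A).card : ℝ) ≤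
        (((n : ℝ) - 1) / n) ^ n * Fintype.card G) := by
  have : NeZero n := ⟨hn.ne'⟩
  choose P hP using fun i => exists_partition_forall_mms_le (v i) n univ
  obtain ⟨c, hc⟩ := exists_bundleSelection_copies_le P
  refine ⟨bundleSelection P c, fun i => hP i (c i), ?_⟩
  simpa [div_self (NeZero.ne (n : ℝ))] using hc

/-- For every instance with `n` agents, `m` goods and monotone normalized
valuations, there is an allocation with copies giving each agent her MMS, whose total
number of copies is at most `((n-1)/n)^n * m`. -/
theorem stmt1 {G : Type*} [Fintype G] [DecidableEq G] (n : ℕ) (hn : 0 < n)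
    (v : Fin n → Finset G → ℝ)
    (hnorm : ∀ i, v i ∅ = 0)
    (hnonneg : ∀ i S, 0 ≤ v i S)
    (hmono : ∀ i S T, S ⊆ T → v i S ≤ v i T) :
    ∃ A : Fin n → Finset G,
      (∀ i, mms (v i) n Finset.univ ≤ v i (A i)) ∧
      ((∑ i, ((A i).card : ℝ)) - ((Finset.univ.biUnion A).card : ℝ) ≤
        (((n : ℝ) - 1) / n) ^ n * Fintype.card G) :=
  stmt1_general n hn v
end

section
/- There exists a threshold m₀ such that for every fair division instance with m ≥ m₀ goods, n agents, and monotone normalized valuations, there exists an allocation with copies (A_1,…,A_n) such that v_i(A_i) ≥ μ_i^n(M) for every agent i, the total number of copies Σ_i |A_i| − |⋃_i A_i| is at most m/e, and every good belongs to at most 1 + min{n−1, 3·ln(m)/ln(ln(m))} of the bundles. -/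
open Finset

/-!
For each agent `i` fix a partition `P i : G → Fin n` attaining her maximin share and give her the
part `j i` of her own partition, for a choice vector `j : Fin n → Fin n`. Over all `n ^ n` choices
a good lies in a Binomial(n, 1/n) number `X` of bundles, so its average number of extra copies is
`E[X] - P(X ≥ 1) = (1 - 1/n) ^ n ≤ 1/e`, and some choice has at most `m / e` copies in total.
If `n - 1 ≤ B = 3 ln m / ln ln m` this suffices. Otherwise discard the choices putting some good
into `T = ⌊B⌋ + 2` or more bundles: by a union bound they are a fraction at most
`m / T! ≤ 1 / (4m)` of all choices, and the slack in `e (1 - 1/n) ^ n ≤ 1 - 1/(4n)` lets the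
averaging run over the remaining ones. With more agents than goods every maximin share is at most
`0` and the empty allocation works.
-/

open Filter Real Topology
open scoped Nat

lemma exists_forall_mms_le {G : Type*} [Finite G] (v : Finset G → ℝ) {d : ℕ} (hd : 0 < d)
    (S : Finset G) : ∃ P : G → Fin d, ∀ j, mms v d S ≤ v (S.filter fun g => P g = j) := by
  have : Nonempty (Fin d) := ⟨⟨0, hd⟩⟩
  obtain ⟨P, hP⟩ :=
    Finite.exists_max fun P : G → Fin d => ⨅ j, v (S.filter fun g => P g = j)
  exact ⟨P, fun j => (ciSup_le hP).trans (ciInf_le (Finite.bddBelow_range _) j)⟩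

lemma mms_nonpos_of_card_lt {G : Type*} {v : Finset G → ℝ} (hv : v ∅ = 0) {d : ℕ}
    {S : Finset G} (hS : #S < d) : mms v d S ≤ 0 := by
  have : Nonempty (Fin d) := ⟨⟨0, by omega⟩⟩
  refine ciSup_le fun P => ?_
  obtain ⟨j, hj⟩ : ∃ j : Fin d, S.filter (fun g => P g = j) = ∅ := by
    by_contra! h
    have hsurj : (univ : Finset (Fin d)) ⊆ S.image P := fun j _ => by
      obtain ⟨g, hg⟩ := h j
      exact mem_image.2 ⟨g, mem_filter.1 hg⟩
    have := (card_le_card hsurj).trans card_image_le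
    simp only [Finset.card_univ, Fintype.card_fin] at this
    omega
  calc ⨅ j, v (S.filter fun g => P g = j) ≤ v (S.filter fun g => P g = j) :=
        ciInf_le (Finite.bddBelow_range _) j
    _ = 0 := by rw [hj, hv]

section Hits

variable {ι α : Type*} [Fintype ι] [DecidableEq ι] [Fintype α] [DecidableEq α]

def hits (c j : ι → α) : Finset ι := {i | c i = j i}

lemma card_filter_forall_mem_eq (c : ι → α) (S : Finset ι) :
    #{j : ι → α | ∀ i ∈ S, c i = j i} = Fintype.card α ^ (Fintype.card ι - #S) := by
  have : ({j : ι → α | ∀ i ∈ S, c i = j i} : Finset (ι → α)) =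
      Fintype.piFinset fun i => if i ∈ S then {c i} else univ := by
    ext j
    simp only [mem_filter, mem_univ, true_and, Fintype.mem_piFinset]
    refine ⟨fun h i => ?_, fun h i hi => ?_⟩
    · split_ifs with hi <;> simp [h i, hi]
    · simpa [hi, eq_comm] using h i
  rw [this, Fintype.card_piFinset]
  simp only [apply_ite card, card_singleton, Finset.card_univ]
  rw [prod_ite, prod_const_one, one_mul, prod_const, filter_not,
    card_sdiff_of_subset (filter_subset _ _), filter_mem_eq_inter, univ_inter, Finset.card_univ]

lemma sum_card_hits (c : ι → α) :
    ∑ j, #(hits c j) = Fintype.card ι * Fintype.card α ^ (Fintype.card ι - 1) := by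
  calc ∑ j, #(hits c j)
        = ∑ i, #{j : ι → α | ∀ i' ∈ ({i} : Finset ι), c i' = j i'} := by
        simp only [hits, card_filter, mem_singleton, forall_eq]
        exact Finset.sum_comm
    _ = Fintype.card ι * Fintype.card α ^ (Fintype.card ι - 1) := by
        simp only [card_filter_forall_mem_eq, card_singleton, sum_const, Finset.card_univ,
          smul_eq_mul]

lemma card_filter_hits_eq_empty (c : ι → α) :
    #{j | hits c j = ∅} = (Fintype.card α - 1) ^ Fintype.card ι := by
  have : ({j | hits c j = ∅} : Finset (ι → α)) =
      Fintype.piFinset fun i => univ.erase (c i) := by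
    ext j
    simp only [hits, filter_eq_empty_iff, mem_filter, mem_univ, true_and, Fintype.mem_piFinset,
      mem_erase, and_true, ne_comm, forall_const, ne_eq]
  simp [this, card_erase_of_mem]

lemma card_filter_le_card_hits (c : ι → α) (T : ℕ) :
    #{j | T ≤ #(hits c j)} ≤
      (Fintype.card ι).choose T * Fintype.card α ^ (Fintype.card ι - T) := by
  calc #{j | T ≤ #(hits c j)}
      ≤ #((powersetCard T univ).biUnion fun S => {j : ι → α | ∀ i ∈ S, c i = j i}) := by
        refine card_le_card fun j hj => ?_
        obtain ⟨S, hS, hST⟩ := exists_subset_card_eq (mem_filter.1 hj).2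
        simp only [mem_biUnion, mem_powersetCard, mem_filter, mem_univ, true_and]
        exact ⟨S, ⟨subset_univ S, hST⟩, fun i hi => by simpa [hits] using hS hi⟩
    _ ≤ ∑ S ∈ powersetCard T univ, #{j : ι → α | ∀ i ∈ S, c i = j i} :=
        card_biUnion_le
    _ = (Fintype.card ι).choose T * Fintype.card α ^ (Fintype.card ι - T) := by
        rw [Finset.sum_congr rfl fun S hS => by
            rw [card_filter_forall_mem_eq, (mem_powersetCard.1 hS).2],
          sum_const, card_powersetCard, Finset.card_univ, smul_eq_mul]

end Hits

lemma sum_min_card_one {β κ : Type*} [Fintype κ] (s : κ → Finset β) :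
    ∑ k, min #(s k) 1 = #{k | (s k).Nonempty} := by
  rw [card_filter]
  refine Finset.sum_congr rfl fun k _ => ?_
  rcases (s k).eq_empty_or_nonempty with h | h <;> simp [h]

section SelfMaps

variable {α : Type*} [Fintype α] [DecidableEq α]

lemma sum_card_hits_sub_one [Nonempty α] (c : α → α) :
    ∑ j, (#(hits c j) - 1) = (Fintype.card α - 1) ^ Fintype.card α := by
  set n := Fintype.card α
  have hsplit : ∑ j, (#(hits c j) - 1) + ∑ j, min #(hits c j) 1 = n ^ n := by
    rw [← sum_add_distrib, Finset.sum_congr rfl fun j _ => tsub_add_min .., sum_card_hits,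
      mul_pow_sub_one Fintype.card_ne_zero]
  have hhit : #{j | (hits c j).Nonempty} + (n - 1) ^ n = n ^ n := by
    have := card_filter_add_card_filter_not (s := (univ : Finset (α → α)))
      (fun j => (hits c j).Nonempty)
    simpa [card_filter_hits_eq_empty, Fintype.card_fun] using this
  rw [sum_min_card_one] at hsplit
  omega

lemma card_filter_le_card_hits_mul_factorial (c : α → α) {T : ℕ}
    (hT : T ≤ Fintype.card α) :
    #{j | T ≤ #(hits c j)} * T ! ≤ Fintype.card α ^ Fintype.card α := by
  set n := Fintype.card α
  calc #{j | T ≤ #(hits c j)} * T ! ≤ n.choose T * n ^ (n - T) * T ! :=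
        Nat.mul_le_mul_right _ (card_filter_le_card_hits c T)
    _ = n.descFactorial T * n ^ (n - T) := by
        rw [Nat.descFactorial_eq_factorial_mul_choose]; ring
    _ ≤ n ^ T * n ^ (n - T) := Nat.mul_le_mul_right _ (Nat.descFactorial_le_pow n T)
    _ = n ^ n := by rw [← pow_add, Nat.add_sub_cancel' hT]

end SelfMaps

section Copies

variable {ι G : Type*} [Fintype ι] [Fintype G] [DecidableEq G]

def copies (A : ι → Finset G) : ℕ := ∑ g, (#{i | g ∈ A i} - 1)

lemma sum_card_eq_card_biUnion_add_copies (A : ι → Finset G) :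
    ∑ i, #(A i) = #(univ.biUnion A) + copies A := by
  have hdeg : ∑ i, #(A i) = ∑ g, #{i | g ∈ A i} := by
    simp only [card_filter]
    rw [Finset.sum_comm]
    simp
  have hunion :
      univ.biUnion A = ({g | ({i | g ∈ A i} : Finset ι).Nonempty} : Finset G) := by
    ext g; simp [filter_nonempty_iff]
  rw [hdeg, hunion, ← sum_min_card_one, copies, ← sum_add_distrib]
  exact Finset.sum_congr rfl fun g _ => by rw [add_comm, tsub_add_min]

variable {α : Type*} [DecidableEq α]

def pick (P : ι → G → α) (j : ι → α) : ι → Finset G := fun i => {g | P i g = j i}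

lemma filter_mem_pick (P : ι → G → α) (j : ι → α) (g : G) :
    ({i | g ∈ pick P j i} : Finset ι) = hits (P · g) j := by
  ext i; simp [pick, hits]

lemma sum_copies_pick [Fintype α] [Nonempty α] (P : α → G → α) :
    ∑ j, copies (pick P j) = Fintype.card G * (Fintype.card α - 1) ^ Fintype.card α := by
  simp only [copies, filter_mem_pick]
  rw [Finset.sum_comm]
  simp [sum_card_hits_sub_one]

end Copies

lemma exp_one_mul_sub_one_pow_le {n : ℕ} (hn : n ≠ 0) :
    exp 1 * ((n : ℝ) - 1) ^ n ≤ n ^ n := by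
  have hn' : (1 : ℝ) ≤ n := by exact_mod_cast Nat.one_le_iff_ne_zero.2 hn
  have hpow : ((n : ℝ) - 1) ^ n = n ^ n * (1 - 1 / n) ^ n := by
    rw [← mul_pow]; congr 1; field_simp
  calc exp 1 * ((n : ℝ) - 1) ^ n ≤ exp 1 * (n ^ n * exp (-1)) := by
        rw [hpow]; gcongr; exact one_sub_div_pow_le_exp_neg hn'
    _ = n ^ n := by rw [mul_left_comm, ← exp_add]; simp

lemma log_one_sub_le_neg_sub_sq_div_two {x : ℝ} (h0 : 0 ≤ x) (h1 : x < 1) :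
    log (1 - x) ≤ -x - x ^ 2 / 2 := by
  have hsum := hasSum_pow_div_log_of_abs_lt_one (abs_lt.2 ⟨by linarith, h1⟩)
  have := sum_le_hasSum (range 2) (fun k _ => by positivity) hsum
  norm_num [sum_range_succ] at this
  linarith

lemma exp_one_mul_sub_one_pow_le_mul {n : ℕ} (hn : 2 ≤ n) :
    exp 1 * ((n : ℝ) - 1) ^ n ≤ n ^ n * (1 - 1 / (4 * n)) := by
  have hn' : (2 : ℝ) ≤ n := by exact_mod_cast hn
  set x : ℝ := 1 / n with hx
  have hx0 : 0 < x := by positivity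
  have hx1 : x ≤ 1 / 2 := by rw [hx]; gcongr
  have hpow : (1 - x) ^ n ≤ exp (-1 - x / 2) := by
    rw [← exp_log (pow_pos (by linarith) n : (0 : ℝ) < (1 - x) ^ n), log_pow]
    gcongr
    calc n * log (1 - x) ≤ n * (-x - x ^ 2 / 2) := by
          gcongr; exact log_one_sub_le_neg_sub_sq_div_two hx0.le (by linarith)
      _ = -1 - x / 2 := by rw [hx]; field_simp
  have hexp : exp (-(x / 2)) ≤ 1 - x / 4 := by
    rw [exp_neg]
    calc (exp (x / 2))⁻¹ ≤ (x / 2 + 1)⁻¹ := inv_anti₀ (by positivity) (add_one_le_exp _)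
      _ ≤ 1 - x / 4 := by rw [inv_le_iff_one_le_mul₀ (by positivity)]; nlinarith
  have hsplit : ((n : ℝ) - 1) ^ n = n ^ n * (1 - x) ^ n := by
    rw [← mul_pow]; congr 1; rw [hx]; field_simp
  calc exp 1 * ((n : ℝ) - 1) ^ n = n ^ n * (exp 1 * (1 - x) ^ n) := by rw [hsplit]; ring
    _ ≤ n ^ n * (exp 1 * exp (-1 - x / 2)) := by gcongr
    _ = n ^ n * exp (-(x / 2)) := by rw [← exp_add]; ring_nf
    _ ≤ n ^ n * (1 - x / 4) := by gcongr
    _ = n ^ n * (1 - 1 / (4 * n)) := by rw [hx]; ring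

section Choice

variable {α G : Type*} [Fintype α] [DecidableEq α] [Fintype G]

lemma card_filter_exists_le_card_hits_mul_factorial (P : α → G → α) {T : ℕ}
    (hT : T ≤ Fintype.card α) :
    #{j | ∃ g, T ≤ #(hits (P · g) j)} * T ! ≤
      Fintype.card G * Fintype.card α ^ Fintype.card α := by
  have hbad : ({j | ∃ g, T ≤ #(hits (P · g) j)} : Finset (α → α)) =
      univ.biUnion fun g => {j | T ≤ #(hits (P · g) j)} := by
    ext j; simp
  calc #{j | ∃ g, T ≤ #(hits (P · g) j)} * T !
      ≤ (∑ g, #{j | T ≤ #(hits (P · g) j)}) * T ! := by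
        rw [hbad]; gcongr; exact card_biUnion_le
    _ = ∑ g, #{j | T ≤ #(hits (P · g) j)} * T ! := sum_mul ..
    _ ≤ ∑ _g : G, Fintype.card α ^ Fintype.card α :=
        sum_le_sum fun g _ => card_filter_le_card_hits_mul_factorial _ hT
    _ = Fintype.card G * Fintype.card α ^ Fintype.card α := by simp

variable [DecidableEq G] [Nonempty α]

lemma exists_mem_copies_pick_le (P : α → G → α) {s : Finset (α → α)} (hs : s.Nonempty)
    (hcard : exp 1 * ((Fintype.card α : ℝ) - 1) ^ Fintype.card α ≤ #s) :
    ∃ j ∈ s, (copies (pick P j) : ℝ) ≤ Fintype.card G / exp 1 := by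
  set f : (α → α) → ℝ := fun j => copies (pick P j)
  set total : ℝ := Fintype.card G * ((Fintype.card α : ℝ) - 1) ^ Fintype.card α
  obtain ⟨j, hj, hmin⟩ := s.exists_min_image f hs
  have hsum : ∑ j ∈ s, f j ≤ total := by
    calc ∑ j ∈ s, f j ≤ ∑ j, f j := sum_le_univ_sum_of_nonneg fun _ => Nat.cast_nonneg _
      _ = total := by
        rw [← Nat.cast_sum, sum_copies_pick]
        push_cast [Nat.cast_sub Fintype.card_pos]
        rfl
  have hmean : #s * f j ≤ ∑ j ∈ s, f j := by simpa using card_nsmul_le_sum s f (f j) hmin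
  have hs_pos : (0 : ℝ) < #s := by exact_mod_cast hs.card_pos
  refine ⟨j, hj, (le_div_iff₀ (exp_pos 1)).2 (le_of_mul_le_mul_left ?_ hs_pos)⟩
  calc #s * (f j * exp 1) = exp 1 * (#s * f j) := by ring
    _ ≤ exp 1 * total := by gcongr; exact hmean.trans hsum
    _ = Fintype.card G * (exp 1 * ((Fintype.card α : ℝ) - 1) ^ Fintype.card α) := by ring
    _ ≤ #s * Fintype.card G := by rw [mul_comm (#s : ℝ)]; gcongr

lemma exists_pick_of_lt (P : α → G → α) {B : ℝ} (hB : 0 ≤ B)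
    (hBα : B < Fintype.card α - 1) (hαG : Fintype.card α ≤ Fintype.card G)
    (hfact : 4 * Fintype.card G ^ 2 ≤ (⌊B⌋₊ + 2)!) :
    ∃ j, (∀ g, (#(hits (P · g) j) : ℝ) ≤ 1 + B) ∧
      (copies (pick P j) : ℝ) ≤ Fintype.card G / exp 1 := by
  set n := Fintype.card α
  set m := Fintype.card G
  set T := ⌊B⌋₊ + 2
  have hTB : (T : ℝ) ≤ B + 2 := by push_cast [T]; linarith [Nat.floor_le hB]
  have hTn : T ≤ n := Nat.lt_succ_iff.1 (by exact_mod_cast (by linarith : (T : ℝ) < n + 1))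
  have hn : 2 ≤ n := le_trans (by omega) hTn
  have hm : 0 < m := by omega
  set good : Finset (α → α) := {j | ∀ g, #(hits (P · g) j) < T}
  set bad : Finset (α → α) := {j | ∃ g, T ≤ #(hits (P · g) j)}
  have hbad : #bad * (4 * n) ≤ n ^ n := by
    refine Nat.le_of_mul_le_mul_right ?_ hm
    calc #bad * (4 * n) * m ≤ #bad * T ! := by rw [mul_assoc]; gcongr; nlinarith
      _ ≤ m * n ^ n := card_filter_exists_le_card_hits_mul_factorial P hTn
      _ = n ^ n * m := mul_comm ..
  have hsplit : #good + #bad = n ^ n := by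
    have := card_filter_add_card_filter_not (s := (univ : Finset (α → α)))
      (fun j => ∀ g, #(hits (P · g) j) < T)
    simpa [Fintype.card_fun] using this
  have hgood : exp 1 * ((n : ℝ) - 1) ^ n ≤ #good := by
    have hn' : (0 : ℝ) < n := by positivity
    have hbad' : (#bad : ℝ) ≤ n ^ n / (4 * n) := by
      rw [le_div_iff₀ (by positivity)]; exact_mod_cast hbad
    calc exp 1 * ((n : ℝ) - 1) ^ n ≤ n ^ n * (1 - 1 / (4 * n)) :=
          exp_one_mul_sub_one_pow_le_mul hn
      _ = n ^ n - n ^ n / (4 * n) := by ring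
      _ ≤ #good := by
          have : (#good : ℝ) + #bad = n ^ n := by exact_mod_cast hsplit
          linarith
  have hn1 : (0 : ℝ) < n - 1 := by
    have : (2 : ℝ) ≤ n := by exact_mod_cast hn
    linarith
  have hgood_ne : good.Nonempty :=
    card_pos.1 <| by exact_mod_cast (mul_pos (exp_pos 1) (pow_pos hn1 n)).trans_le hgood
  obtain ⟨j, hj, hcopies⟩ := exists_mem_copies_pick_le P hgood_ne hgood
  refine ⟨j, fun g => ?_, hcopies⟩
  have : (#(hits (P · g) j) : ℝ) + 1 ≤ T := by exact_mod_cast (mem_filter.1 hj).2 g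
  linarith

lemma exists_pick (P : α → G → α) {B : ℝ} (hB : 0 ≤ B)
    (hαG : Fintype.card α ≤ Fintype.card G)
    (hfact : 4 * Fintype.card G ^ 2 ≤ (⌊B⌋₊ + 2)!) :
    ∃ j, (∀ g, (#(hits (P · g) j) : ℝ) ≤ 1 + min ((Fintype.card α : ℝ) - 1) B) ∧
      (copies (pick P j) : ℝ) ≤ Fintype.card G / exp 1 := by
  rcases le_or_gt ((Fintype.card α : ℝ) - 1) B with hBα | hBα
  · obtain ⟨j, -, hcopies⟩ := exists_mem_copies_pick_le P univ_nonempty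
      (by simpa using exp_one_mul_sub_one_pow_le Fintype.card_ne_zero)
    refine ⟨j, fun g => ?_, hcopies⟩
    have : (#(hits (P · g) j) : ℝ) ≤ Fintype.card α := by exact_mod_cast card_le_univ _
    rw [min_eq_left hBα]
    linarith
  · obtain ⟨j, hhits, hcopies⟩ := exists_pick_of_lt P hB hBα hαG hfact
    exact ⟨j, fun g => (hhits g).trans_eq (by rw [min_eq_right hBα.le]), hcopies⟩

end Choice

lemma mul_log_sub_one_le_log_factorial (k : ℕ) : k * (log k - 1) ≤ log (k ! : ℝ) := by
  rcases eq_or_ne k 0 with rfl | hk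
  · simp
  have hk' : 0 ≤ log (k : ℝ) := log_nonneg (by exact_mod_cast Nat.one_le_iff_ne_zero.2 hk)
  have hπ : 0 ≤ log (2 * π) := log_nonneg (by linarith [pi_gt_three])
  linarith [Stirling.le_log_factorial_stirling hk]

lemma tendsto_log_div_self_atTop : Tendsto (fun y => log y / y) atTop (𝓝 0) := by
  simpa using tendsto_pow_log_div_mul_add_atTop 1 0 1 one_ne_zero

lemma eventually_log_le_mul_log_sub_one :
    ∀ᶠ x : ℝ in atTop, exp 1 ≤ 3 * log x / log (log x) ∧
      log (4 * x ^ 2) ≤ 3 * log x / log (log x) * (log (3 * log x / log (log x)) - 1) := by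
  have hL := tendsto_log_atTop
  have hratio := (tendsto_log_div_self_atTop.comp (hL.comp hL)).eventually_le_const
    (by norm_num : (0 : ℝ) < 1 / 6)
  filter_upwards [eventually_gt_atTop 0, hL.eventually_ge_atTop (2 * log 4),
    hL.eventually_gt_atTop 1, hratio] with x hx hL4 hL1 hratio
  simp only [Function.comp_apply] at hratio
  set L := log x
  have hLL : 0 < log L := log_pos hL1
  set f := 3 * L / log L
  have hf : 3 ≤ f := by
    rw [le_div_iff₀ hLL]; linarith [log_le_self (by linarith : (0 : ℝ) ≤ L)]
  have hlog3 : 1 ≤ log 3 := by rw [le_log_iff_exp_le (by norm_num)]; linarith [exp_one_lt_d9]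
  have hlogf : log f = log 3 + log L - log (log L) := by
    rw [log_div (by positivity) hLL.ne', log_mul (by norm_num) (by positivity)]
  refine ⟨by linarith [exp_one_lt_d9], ?_⟩
  calc log (4 * x ^ 2) = log 4 + 2 * L := by
        rw [log_mul (by norm_num) (by positivity), log_pow]; push_cast; ring
    _ ≤ 3 * L * (1 - log (log L) / log L) := by nlinarith
    _ = f * (log L - log (log L)) := by simp only [f]; field_simp
    _ ≤ f * (log f - 1) := mul_le_mul_of_nonneg_left (by linarith) (by positivity)

lemma eventually_sq_le_factorial :
    ∀ᶠ m : ℕ in atTop, 0 ≤ 3 * log m / log (log m) ∧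
      4 * m ^ 2 ≤ (⌊3 * log m / log (log m)⌋₊ + 2)! := by
  filter_upwards [tendsto_natCast_atTop_atTop.eventually eventually_log_le_mul_log_sub_one,
    eventually_ge_atTop 1] with m ⟨hf, hlog⟩ hm
  set f := 3 * log m / log (log m)
  set k := ⌊f⌋₊ + 2
  have hfk : f ≤ k := by push_cast [k]; linarith [Nat.lt_floor_add_one f]
  have hf0 : 0 < f := (exp_pos 1).trans_le hf
  have hlogf : 1 ≤ log f := by rwa [le_log_iff_exp_le hf0]
  refine ⟨hf0.le, ?_⟩
  have : log (4 * m ^ 2 : ℝ) ≤ log (k ! : ℝ) :=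
    calc log (4 * m ^ 2 : ℝ) ≤ f * (log f - 1) := hlog
      _ ≤ k * (log k - 1) := by gcongr
      _ ≤ log (k ! : ℝ) := mul_log_sub_one_le_log_factorial k
  exact_mod_cast (log_le_log_iff (by positivity) (by positivity)).1 this

/-- There is a threshold `m₀` such that every instance with `m ≥ m₀` goods,
`n` agents and monotone normalized valuations admits an allocation with copies giving each
agent her MMS, with total number of copies at most `m / e`, and where every good belongs to
at most `1 + min (n - 1) (3 ln m / ln ln m)` bundles. -/
theorem stmt2 :
    ∃ m₀ : ℕ, ∀ (G : Type) (_ : Fintype G) (_ : DecidableEq G) (n : ℕ), 0 < n →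
      ∀ v : Fin n → Finset G → ℝ,
        (∀ i, v i ∅ = 0) →
        (∀ i S, 0 ≤ v i S) →
        (∀ i S T, S ⊆ T → v i S ≤ v i T) →
        m₀ ≤ Fintype.card G →
        ∃ A : Fin n → Finset G,
          (∀ i, mms (v i) n Finset.univ ≤ v i (A i)) ∧
          ((∑ i, ((A i).card : ℝ)) - ((Finset.univ.biUnion A).card : ℝ) ≤
            (Fintype.card G : ℝ) / Real.exp 1) ∧
          (∀ g : G, ((Finset.univ.filter fun i => g ∈ A i).card : ℝ) ≤
            1 + min ((n : ℝ) - 1)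
              (3 * Real.log (Fintype.card G) / Real.log (Real.log (Fintype.card G)))) := by
  obtain ⟨m₀, hm₀⟩ := eventually_atTop.1 eventually_sq_le_factorial
  refine ⟨m₀, fun G _ _ n hn v hv0 _ _ hm => ?_⟩
  obtain ⟨hB, hfact⟩ := hm₀ _ hm
  have : Nonempty (Fin n) := ⟨⟨0, hn⟩⟩
  rcases lt_or_ge (Fintype.card G) n with hGn | hnG
  · refine ⟨fun _ => ∅, fun i => ?_, ?_, fun g => ?_⟩
    · rw [hv0]; exact mms_nonpos_of_card_lt (hv0 i) (by simpa using hGn)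
    · simp only [card_empty, Nat.cast_zero, sum_const_zero, zero_sub]
      exact (neg_nonpos.2 (Nat.cast_nonneg _)).trans (by positivity)
    · have : (1 : ℝ) ≤ n := by exact_mod_cast hn
      simp only [notMem_empty, filter_false, card_empty, Nat.cast_zero]
      exact add_nonneg zero_le_one (le_min (sub_nonneg.2 this) hB)
  · choose P hP using fun i => exists_forall_mms_le (v i) hn univ
    obtain ⟨j, hhits, hcopies⟩ := exists_pick P hB (by simpa using hnG) hfact
    refine ⟨pick P j, fun i => hP i (j i), ?_, fun g => ?_⟩
    · rw [← Nat.cast_sum, sum_card_eq_card_biUnion_add_copies]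
      push_cast
      linarith
    · simpa [filter_mem_pick] using hhits g
end

section
/- Let M be a finite set of goods and let N be a set of n ≥ 1 agents, each with an additive valuation v_i : 2^M → ℝ≥0. If v_i(M) ≥ n for every agent i, and v_i({g}) < 1 for every agent i and every good g ∈ M, then there exists an allocation with copies (A_1,…,A_n), A_i ⊆ M, such that v_i(A_i) ≥ 1 for every agent i, each good belongs to at most two of the bundles, and at most n−1 goods belong to two bundles. -/
/-!
Induction on the agents, carrying a distinguished good `t` of the goods `S` still available.
Among the subsets of `S` that contain `t` and are worth at least `1` to some agent `i`, take an
inclusion-minimal one `T`. It is not `{t}`, so it contains another good `t'`, and `T \ {t'}` is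
worth less than `1` to everyone. Agent `i` receives `T`; the others share `(S \ T) ∪ {t'}`, which
each of them values at more than its value of `S` minus `1`, and recurse with `t'` as the new
distinguished good. Only `t'` is then shared between `i` and the others, and the distinguished good
of every round is held at most once, so each round adds at most one copy.
-/

open Finset Function

section BagFilling

variable {G I : Type*} [DecidableEq G]

def holders (N : Finset I) (A : I → Finset G) (g : G) : Finset I :=
  N.filter fun j => g ∈ A j

def copied (N : Finset I) (S : Finset G) (A : I → Finset G) : Finset G :=
  S.filter fun g => (holders N A g).card = 2

lemma holders_eq_empty_of_notMem {N : Finset I} {S : Finset G} {A : I → Finset G}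
    (hA : ∀ j ∈ N, A j ⊆ S) {g : G} (hg : g ∉ S) : holders N A g = ∅ :=
  filter_eq_empty_iff.mpr fun j hj hgA => hg (hA j hj hgA)

lemma copied_eq_empty_of_card_le_one {N : Finset I} (hN : N.card ≤ 1) (S : Finset G)
    (A : I → Finset G) : copied N S A = ∅ :=
  filter_eq_empty_iff.mpr fun g _ h2 => by
    have := card_le_card (filter_subset (fun j => g ∈ A j) N)
    simp only [holders] at h2
    omega

lemma holders_update [DecidableEq I] {N : Finset I} {i : I} (hi : i ∈ N) (A : I → Finset G)
    (T : Finset G) (g : G) :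
    holders N (update A i T) g =
      if g ∈ T then insert i (holders (N.erase i) A g) else holders (N.erase i) A g := by
  have hrest : holders (N.erase i) (update A i T) g = holders (N.erase i) A g :=
    filter_congr fun j hj => by rw [update_of_ne (ne_of_mem_erase hj)]
  rw [← insert_erase hi, holders, filter_insert, update_self, ← holders, hrest,
    erase_insert_eq_erase, erase_idem]

lemma sum_insert_sdiff_eq_sub {M : Type*} [AddCommGroup M] {S T : Finset G} (hTS : T ⊆ S)
    {t' : G} (ht' : t' ∈ T) (f : G → M) :
    ∑ g ∈ insert t' (S \ T), f g = ∑ g ∈ S, f g - ∑ g ∈ T.erase t', f g := by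
  rw [sum_insert (fun h => (mem_sdiff.mp h).2 ht'), sum_sdiff_eq_sub hTS, sum_erase_eq_sub ht']
  abel

lemma exists_critical_bundle (w : I → G → ℝ) (hsingle : ∀ i g, w i g < 1) {N : Finset I}
    {S : Finset G} {t : G} (ht : t ∈ S) {i₀ : I} (hi₀ : i₀ ∈ N) (hval : 1 ≤ ∑ g ∈ S, w i₀ g) :
    ∃ T ⊆ S, t ∈ T ∧ ∃ i ∈ N, 1 ≤ ∑ g ∈ T, w i g ∧
      ∃ t' ∈ T, t' ≠ t ∧ ∀ j ∈ N, ∑ g ∈ T.erase t', w j g < 1 := by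
  obtain ⟨T, hTS, hmin⟩ := exists_minimal_le_of_wellFoundedLT
    (fun T : Finset G => t ∈ T ∧ ∃ i ∈ N, 1 ≤ ∑ g ∈ T, w i g) S ⟨ht, i₀, hi₀, hval⟩
  obtain ⟨htT, i, hi, hiT⟩ := hmin.prop
  have hT : 1 < T.card := by
    by_contra! hT
    have hTt : T = {t} := eq_singleton_iff_unique_mem.mpr
      ⟨htT, fun x hx => card_le_one.mp hT x hx t htT⟩
    rw [hTt, sum_singleton] at hiT
    exact (hsingle i t).not_ge hiT
  obtain ⟨t', ht'T, ht't⟩ := exists_mem_ne hT t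
  refine ⟨T, hTS, htT, i, hi, hiT, t', ht'T, ht't, fun j hj => not_le.mp fun hj1 => ?_⟩
  exact hmin.not_prop_of_lt (erase_ssubset ht'T) ⟨mem_erase.mpr ⟨ht't.symm, htT⟩, j, hj, hj1⟩

structure IsBagFilling (w : I → G → ℝ) (N : Finset I) (S : Finset G) (t : G)
    (A : I → Finset G) : Prop where
  one_le_sum : ∀ i ∈ N, 1 ≤ ∑ g ∈ A i, w i g
  subset : ∀ i ∈ N, A i ⊆ S
  card_holders_le_two : ∀ g, (holders N A g).card ≤ 2
  card_holders_le_one : (holders N A t).card ≤ 1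
  card_copied_le : (copied N S A).card ≤ N.card - 1

lemma IsBagFilling.update [DecidableEq I] {w : I → G → ℝ} {N : Finset I} {S T : Finset G}
    {t t' : G} {i : I} {A : I → Finset G}
    (hA : IsBagFilling w (N.erase i) (insert t' (S \ T)) t' A) (hi : i ∈ N) (hTS : T ⊆ S)
    (htT : t ∈ T) (ht'T : t' ∈ T) (ht't : t' ≠ t) (hiT : 1 ≤ ∑ g ∈ T, w i g) :
    IsBagFilling w N S t (Function.update A i T) := by
  have hunheld : ∀ g ∈ T, g ≠ t' → holders (N.erase i) A g = ∅ := fun g hgT hgt' =>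
    holders_eq_empty_of_notMem hA.subset fun hg => by
      rcases mem_insert.mp hg with rfl | hg
      · exact hgt' rfl
      · exact (mem_sdiff.mp hg).2 hgT
  have hS : insert t' (S \ T) ⊆ S := insert_subset (hTS ht'T) sdiff_subset
  refine ⟨fun j hj => ?_, fun j hj => ?_, fun g => ?_, ?_, ?_⟩
  · rcases eq_or_ne j i with rfl | hji
    · rwa [update_self]
    · rw [update_of_ne hji]
      exact hA.one_le_sum j (mem_erase.mpr ⟨hji, hj⟩)
  · rcases eq_or_ne j i with rfl | hji
    · rwa [update_self]
    · rw [update_of_ne hji]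
      exact (hA.subset j (mem_erase.mpr ⟨hji, hj⟩)).trans hS
  · rw [holders_update hi]
    split_ifs with hgT
    · rcases eq_or_ne g t' with rfl | hgt'
      · exact (card_insert_le _ _).trans (by have := hA.card_holders_le_one; omega)
      · simp [hunheld g hgT hgt']
    · exact hA.card_holders_le_two g
  · simp [holders_update hi, htT, hunheld t htT ht't.symm]
  · by_cases hN : N.card ≤ 1
    · simp [copied_eq_empty_of_card_le_one hN]
    have hsub : copied N S (Function.update A i T) ⊆
        insert t' (copied (N.erase i) (insert t' (S \ T)) A) := by
      intro g hg
      obtain ⟨hgS, h2⟩ := mem_filter.mp hg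
      rcases eq_or_ne g t' with rfl | hgt'
      · exact mem_insert_self _ _
      rw [holders_update hi] at h2
      split_ifs at h2 with hgT
      · simp [hunheld g hgT hgt'] at h2
      · exact mem_insert_of_mem
          (mem_filter.mpr ⟨mem_insert_of_mem (mem_sdiff.mpr ⟨hgS, hgT⟩), h2⟩)
    have hcopied := hA.card_copied_le
    have hcard := card_erase_add_one hi
    calc (copied N S (Function.update A i T)).card
        ≤ (copied (N.erase i) (insert t' (S \ T)) A).card + 1 :=
          (card_le_card hsub).trans (card_insert_le _ _)
      _ ≤ N.card - 1 := by omega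

theorem exists_isBagFilling [DecidableEq I] (w : I → G → ℝ) (hsingle : ∀ i g, w i g < 1)
    (N : Finset I) {S : Finset G} {t : G} (ht : t ∈ S)
    (hval : ∀ i ∈ N, (N.card : ℝ) ≤ ∑ g ∈ S, w i g) :
    ∃ A, IsBagFilling w N S t A := by
  induction N using Finset.strongInduction generalizing S t with
  | H N ih =>
    rcases N.eq_empty_or_nonempty with rfl | ⟨i₀, hi₀⟩
    · exact ⟨fun _ => ∅, by simp, by simp, by simp [holders], by simp [holders],
        by rw [copied_eq_empty_of_card_le_one (by simp)]; simp⟩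
    have hi₀S : 1 ≤ ∑ g ∈ S, w i₀ g :=
      le_trans (by exact_mod_cast card_pos.mpr ⟨i₀, hi₀⟩) (hval i₀ hi₀)
    obtain ⟨T, hTS, htT, i, hi, hiT, t', ht'T, ht't, hcrit⟩ :=
      exists_critical_bundle w hsingle ht hi₀ hi₀S
    have hrest : ∀ j ∈ N.erase i, ((N.erase i).card : ℝ) ≤ ∑ g ∈ insert t' (S \ T), w j g := by
      intro j hj
      have hN : ((N.erase i).card : ℝ) + 1 = N.card := by exact_mod_cast card_erase_add_one hi
      rw [sum_insert_sdiff_eq_sub hTS ht'T]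
      linarith [hval j (mem_of_mem_erase hj), hcrit j (mem_of_mem_erase hj)]
    obtain ⟨A, hA⟩ := ih _ (erase_ssubset hi) (mem_insert_self t' _) hrest
    exact ⟨_, hA.update hi hTS htT ht'T ht't hiT⟩

theorem exists_bagFilling (w : I → G → ℝ) (hsingle : ∀ i g, w i g < 1)
    (N : Finset I) (S : Finset G) (hval : ∀ i ∈ N, (N.card : ℝ) ≤ ∑ g ∈ S, w i g) :
    ∃ A : I → Finset G, (∀ i ∈ N, 1 ≤ ∑ g ∈ A i, w i g) ∧
      (∀ g, (holders N A g).card ≤ 2) ∧ (copied N S A).card ≤ N.card - 1 := by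
  classical
  rcases S.eq_empty_or_nonempty with rfl | ⟨t, ht⟩
  · obtain rfl : N = ∅ := eq_empty_of_forall_notMem fun i hi => by
      have h1 : (1 : ℝ) ≤ N.card := by exact_mod_cast card_pos.mpr ⟨i, hi⟩
      linarith [hval i hi, sum_empty (f := w i)]
    exact ⟨fun _ => ∅, by simp, by simp [holders], by simp [copied]⟩
  obtain ⟨A, hA⟩ := exists_isBagFilling w hsingle N ht hval
  exact ⟨A, hA.one_le_sum, hA.card_holders_le_two, hA.card_copied_le⟩

end BagFilling

theorem stmt4_general {G : Type*} [Fintype G] [DecidableEq G] (n : ℕ)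
    (w : Fin n → G → ℝ)
    (htotal : ∀ i, (n : ℝ) ≤ ∑ g : G, w i g)
    (hsingle : ∀ i g, w i g < 1) :
    ∃ A : Fin n → Finset G,
      (∀ i, (1 : ℝ) ≤ ∑ g ∈ A i, w i g) ∧
      (∀ g : G, (Finset.univ.filter fun i => g ∈ A i).card ≤ 2) ∧
      (Finset.univ.filter fun g : G =>
        (Finset.univ.filter fun i => g ∈ A i).card = 2).card ≤ n - 1 := by
  obtain ⟨A, hval, htwo, hcopied⟩ :=
    exists_bagFilling w hsingle univ univ fun i _ => by simpa using htotal i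
  exact ⟨A, fun i => hval i (mem_univ i), htwo, by rwa [card_univ, Fintype.card_fin] at hcopied⟩

/-- Bag-filling with copies: if every agent has additive valuation (given by
weights `w i`), values all the goods at least `n`, and values every single good strictly
below `1`, then there is an allocation with copies giving every agent value at least `1`,
in which every good belongs to at most two bundles and at most `n - 1` goods belong to
two bundles. -/
theorem stmt4 {G : Type*} [Fintype G] [DecidableEq G] (n : ℕ) (hn : 1 ≤ n)
    (w : Fin n → G → ℝ)
    (hw : ∀ i g, 0 ≤ w i g)
    (htotal : ∀ i, (n : ℝ) ≤ ∑ g : G, w i g)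
    (hsingle : ∀ i g, w i g < 1) :
    ∃ A : Fin n → Finset G,
      (∀ i, (1 : ℝ) ≤ ∑ g ∈ A i, w i g) ∧
      (∀ g : G, (Finset.univ.filter fun i => g ∈ A i).card ≤ 2) ∧
      (Finset.univ.filter fun g : G =>
        (Finset.univ.filter fun i => g ∈ A i).card = 2).card ≤ n - 1 :=
  stmt4_general n w htotal hsingle
end

section
/- For every fair division instance with n ≥ 2 agents and additive valuations, there exists an allocation with copies (A_1,…,A_n) such that v_i(A_i) ≥ μ_i^n(M) for every agent i, each good belongs to at most two of the bundles, and at most n−2 goods belong to two bundles (i.e., at most n−2 distinct copies are made, each good copied at most once). -/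
open Finset

section Aux

variable {G : Type*} [Fintype G] [DecidableEq G]

lemma mms_attained (w : G → ℝ) (n : ℕ) (hn : 0 < n) :
    ∃ P : G → Fin n, ∀ k : Fin n,
      mms (fun S => ∑ g ∈ S, w g) n Finset.univ ≤
        ∑ g ∈ Finset.univ.filter (fun g => P g = k), w g := by
  haveI : NeZero n := ⟨hn.ne'⟩
  have hne : Nonempty (G → Fin n) := inferInstance
  obtain ⟨P, hP⟩ := Finite.exists_max
    (fun P : G → Fin n => ⨅ j : Fin n, ∑ g ∈ Finset.univ.filter (fun g => P g = j), w g)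
  refine ⟨P, fun k => ?_⟩
  have h1 : mms (fun S => ∑ g ∈ S, w g) n Finset.univ ≤
      ⨅ j : Fin n, ∑ g ∈ Finset.univ.filter (fun g => P g = j), w g := by
    exact ciSup_le hP
  refine h1.trans ?_
  exact ciInf_le (Set.finite_range _).bddBelow k

end Aux

section Hall

/-- Either some `b ∈ B` is liked by nobody in `A`, or there is a nonempty set `W` of agents
matched injectively to liked elements of `B` such that nobody outside `W` likes a matched
element. -/
lemma hall_struct {α β : Type*} [DecidableEq α] [DecidableEq β]
    (likes : α → β → Prop) [∀ a b, Decidable (likes a b)] :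
    ∀ N : ℕ, ∀ (A : Finset α) (B : Finset β), A.card ≤ N →
    (∀ a ∈ A, ∃ b ∈ B, likes a b) → A.card < B.card →
    (∃ b ∈ B, ∀ a ∈ A, ¬ likes a b) ∨
    (∃ (W : Finset α) (f : α → β), W ⊆ A ∧ W.Nonempty ∧ Set.InjOn f ↑W ∧
      (∀ w ∈ W, f w ∈ B ∧ likes w (f w)) ∧
      (∀ a ∈ A, ∀ w ∈ W, likes a (f w) → a ∈ W)) := by
  intro N
  induction N with
  | zero =>
    intro A B hA _ hcard
    have : A = ∅ := Finset.card_eq_zero.mp (Nat.le_zero.mp hA)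
    subst this
    obtain ⟨b, hb⟩ : B.Nonempty := Finset.card_pos.mp (by omega)
    exact Or.inl ⟨b, hb, by simp⟩
  | succ N ih =>
    intro A B hA hlike hcard
    rcases Finset.eq_empty_or_nonempty A with rfl | hAne
    · obtain ⟨b, hb⟩ : B.Nonempty := Finset.card_pos.mp (by simpa using hcard)
      exact Or.inl ⟨b, hb, by simp⟩
    by_cases hhall : ∀ s : Finset {a // a ∈ A},
        s.card ≤ (s.biUnion (fun a => B.filter (fun b => likes a.1 b))).card
    · -- perfect matching on A
      obtain ⟨f0, hf0inj, hf0⟩ :=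
        (Finset.all_card_le_biUnion_card_iff_exists_injective
          (fun a : {a // a ∈ A} => B.filter (fun b => likes a.1 b))).mp hhall
      obtain ⟨b0, hb0⟩ : B.Nonempty := Finset.card_pos.mp (by omega)
      refine Or.inr ⟨A, fun a => if h : a ∈ A then f0 ⟨a, h⟩ else b0, subset_rfl, hAne, ?_, ?_, ?_⟩
      · intro x hx y hy hxy
        simp only [Finset.mem_coe] at hx hy
        simp only [dif_pos hx, dif_pos hy] at hxy
        exact Subtype.mk_eq_mk.mp (hf0inj hxy)
      · intro a ha
        simp only [dif_pos ha]
        have := hf0 ⟨a, ha⟩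
        simp only [Finset.mem_filter] at this
        exact this
      · intro a ha _ _ _; exact ha
    · push_neg at hhall
      obtain ⟨s, hs⟩ := hhall
      set J : Finset α := s.image Subtype.val with hJ
      have hJA : J ⊆ A := by
        intro a ha; simp only [hJ, Finset.mem_image] at ha; obtain ⟨x, _, rfl⟩ := ha; exact x.2
      have hJcard : J.card = s.card := Finset.card_image_of_injOn (Subtype.val_injective.injOn)
      set NJ : Finset β := s.biUnion (fun a => B.filter (fun b => likes a.1 b)) with hNJ
      have hNJB : NJ ⊆ B := by
        intro b hb; simp only [hNJ, Finset.mem_biUnion, Finset.mem_filter] at hb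
        obtain ⟨a, _, hb, _⟩ := hb; exact hb
      have hJne : J.Nonempty := by
        rw [← Finset.card_pos, hJcard]; omega
      -- membership fact : a ∈ J, b ∈ B, likes a b → b ∈ NJ
      have hmemNJ : ∀ a ∈ J, ∀ b ∈ B, likes a b → b ∈ NJ := by
        intro a ha b hb hl
        simp only [hJ, Finset.mem_image] at ha
        obtain ⟨x, hx, rfl⟩ := ha
        simp only [hNJ, Finset.mem_biUnion]
        exact ⟨x, hx, Finset.mem_filter.mpr ⟨hb, hl⟩⟩
      set B' : Finset β := B \ NJ with hB'
      set A'' : Finset α := (A \ J).filter (fun a => ∃ b ∈ B', likes a b) with hA''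
      have hA''sub : A'' ⊆ A \ J := Finset.filter_subset _ _
      have hcard1 : A''.card ≤ N := by
        have h1 : A''.card ≤ (A \ J).card := Finset.card_le_card hA''sub
        have h2 : (A \ J).card = A.card - J.card := Finset.card_sdiff_of_subset hJA
        have : 1 ≤ J.card := Finset.card_pos.mpr hJne
        omega
      have hcard2 : A''.card < B'.card := by
        have h1 : A''.card ≤ A.card - J.card := by
          have := Finset.card_le_card hA''sub
          rw [Finset.card_sdiff_of_subset hJA] at this; exact this
        have h2 : B'.card = B.card - NJ.card := Finset.card_sdiff_of_subset hNJB
        have h3 : NJ.card < s.card := hs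
        have h4 : NJ.card ≤ B.card := Finset.card_le_card hNJB
        have h5 : J.card ≤ A.card := Finset.card_le_card hJA
        omega
      have hlike'' : ∀ a ∈ A'', ∃ b ∈ B', likes a b := by
        intro a ha; exact (Finset.mem_filter.mp ha).2
      rcases ih A'' B' hcard1 hlike'' hcard2 with ⟨b, hbB', hb⟩ | ⟨W, f, hWA, hWne, hinj, hfm, hclosed⟩
      · -- lift outcome 1
        left
        refine ⟨b, (Finset.mem_sdiff.mp hbB').1, ?_⟩
        intro a haA hl
        by_cases haJ : a ∈ J
        · exact (Finset.mem_sdiff.mp hbB').2 (hmemNJ a haJ b (Finset.mem_sdiff.mp hbB').1 hl)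
        · have haA'' : a ∈ A'' := by
            rw [hA'', Finset.mem_filter]
            exact ⟨Finset.mem_sdiff.mpr ⟨haA, haJ⟩, ⟨b, hbB', hl⟩⟩
          exact hb a haA'' hl
      · -- lift outcome 2
        right
        refine ⟨W, f, hWA.trans (hA''sub.trans (Finset.sdiff_subset)), hWne, hinj, ?_, ?_⟩
        · intro w hw
          obtain ⟨h1, h2⟩ := hfm w hw
          exact ⟨(Finset.mem_sdiff.mp h1).1, h2⟩
        · intro a haA w hw hl
          have hfwB' : f w ∈ B' := (hfm w hw).1
          by_cases haJ : a ∈ J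
          · exact absurd (hmemNJ a haJ (f w) (Finset.mem_sdiff.mp hfwB').1 hl)
              (Finset.mem_sdiff.mp hfwB').2
          · have haA'' : a ∈ A'' := by
              rw [hA'', Finset.mem_filter]
              exact ⟨Finset.mem_sdiff.mpr ⟨haA, haJ⟩, ⟨f w, hfwB', hl⟩⟩
            exact hclosed a haA'' w hw hl

end Hall

section Line

variable {G : Type*} [Fintype G] [DecidableEq G] {n : ℕ}

lemma line_lemma (w : Fin n → G → ℝ) (hw : ∀ i g, 0 ≤ w i g) (μ : Fin n → ℝ) :
    ∀ N : ℕ, ∀ (Q : Finset (Fin n)) (T : Finset G) (x₀ : G), Q.card ≤ N → x₀ ∈ T →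
    (∀ j ∈ Q, 0 < μ j) →
    (∀ j ∈ Q, ∀ g ∈ T, w j g < μ j) →
    (∀ j ∈ Q, (Q.card : ℝ) * μ j ≤ ∑ g ∈ T, w j g) →
    ∃ A : Fin n → Finset G,
      (∀ j ∈ Q, A j ⊆ T ∧ μ j ≤ ∑ g ∈ A j, w j g) ∧
      (∀ j ∉ Q, A j = ∅) ∧
      (Q.filter (fun j => x₀ ∈ A j)).card ≤ 1 ∧
      (∀ g : G, (Q.filter (fun j => g ∈ A j)).card ≤ 2) ∧
      ((Finset.univ : Finset G).filter
        (fun g : G => (Q.filter (fun j => g ∈ A j)).card = 2)).card ≤ Q.card - 1 := by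
  intro N
  induction N with
  | zero =>
    intro Q T x₀ hQN _ _ _ _
    have hQ : Q = ∅ := Finset.card_eq_zero.mp (Nat.le_zero.mp hQN)
    subst hQ
    exact ⟨fun _ => ∅, by simp, by simp, by simp, by simp, by simp⟩
  | succ N ih =>
    intro Q T x₀ hQN hx₀T hμpos hsmall htot
    rcases Finset.eq_empty_or_nonempty Q with rfl | hQne
    · exact ⟨fun _ => ∅, by simp, by simp, by simp, by simp, by simp⟩
    by_cases hr1 : Q.card = 1
    · -- single agent takes everything
      obtain ⟨i, rfl⟩ := Finset.card_eq_one.mp hr1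
      refine ⟨fun j => if j = i then T else ∅, ?_, ?_, ?_, ?_, ?_⟩
      · intro j hj
        rw [Finset.mem_singleton] at hj
        subst hj
        simp only [eq_self_iff_true, if_true]
        refine ⟨subset_rfl, ?_⟩
        have := htot j (Finset.mem_singleton_self j)
        rw [hr1] at this
        push_cast at this
        linarith
      · intro j hj
        rw [Finset.mem_singleton] at hj
        simp [if_neg hj]
      · exact (Finset.card_le_card (Finset.filter_subset _ _)).trans (by simp)
      · intro g
        exact (Finset.card_le_card (Finset.filter_subset _ _)).trans (by simp)
      · have : ∀ g : G, (({i} : Finset (Fin n)).filter (fun j => g ∈ if j = i then T else ∅)).card ≠ 2 := by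
          intro g h
          have := (Finset.card_le_card (Finset.filter_subset
            (fun j => g ∈ if j = i then T else ∅) ({i} : Finset (Fin n)))).trans_eq
            (Finset.card_singleton i)
          omega
        rw [Finset.filter_false_of_mem (fun g _ => this g)]
        simp
    -- main case : at least two agents
    have hr2 : 2 ≤ Q.card := by
      have := Finset.card_pos.mpr hQne; omega
    classical
    set 𝒳 : Finset (Finset G) :=
      T.powerset.filter (fun X => x₀ ∈ X ∧ ∃ i ∈ Q, μ i ≤ ∑ g ∈ X, w i g) with h𝒳
    have h𝒳ne : 𝒳.Nonempty := by
      obtain ⟨i, hiQ⟩ := hQne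
      refine ⟨T, ?_⟩
      rw [h𝒳, Finset.mem_filter, Finset.mem_powerset]
      refine ⟨subset_rfl, hx₀T, i, hiQ, ?_⟩
      have h1 : (1 : ℝ) * μ i ≤ (Q.card : ℝ) * μ i := by
        have : (1 : ℝ) ≤ (Q.card : ℝ) := by exact_mod_cast Nat.one_le_iff_ne_zero.mpr (by omega)
        nlinarith [hμpos i hiQ]
      linarith [htot i hiQ]
    obtain ⟨X₀, hX₀𝒳, hmin⟩ := Finset.exists_min_image 𝒳 (fun X => X.card) h𝒳ne
    rw [h𝒳, Finset.mem_filter, Finset.mem_powerset] at hX₀𝒳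
    obtain ⟨hX₀T, hx₀X₀, i, hiQ, hiv⟩ := hX₀𝒳
    -- X₀ has an element other than x₀
    have hex : (X₀.erase x₀).Nonempty := by
      rw [Finset.nonempty_iff_ne_empty]
      intro h
      have hX₀ : X₀ = {x₀} := by
        have := Finset.insert_erase hx₀X₀
        rw [h] at this
        simp at this
        exact this.symm
      rw [hX₀, Finset.sum_singleton] at hiv
      exact absurd hiv (not_le.mpr (hsmall i hiQ x₀ hx₀T))
    obtain ⟨x, hx⟩ := hex
    rw [Finset.mem_erase] at hx
    obtain ⟨hxne, hxX₀⟩ := hx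
    -- minimality : erasing x kills everybody's value
    have hkey : ∀ j ∈ Q, ∑ g ∈ X₀.erase x, w j g < μ j := by
      intro j hjQ
      by_contra hcon
      push_neg at hcon
      have hmem : X₀.erase x ∈ 𝒳 := by
        rw [h𝒳, Finset.mem_filter, Finset.mem_powerset]
        exact ⟨(Finset.erase_subset _ _).trans hX₀T,
          Finset.mem_erase.mpr ⟨hxne.symm, hx₀X₀⟩, j, hjQ, hcon⟩
      have := hmin _ hmem
      have hlt : (X₀.erase x).card < X₀.card := Finset.card_erase_lt_of_mem hxX₀
      omega
    set T' : Finset G := T \ (X₀.erase x) with hT'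
    have hT'T : T' ⊆ T := Finset.sdiff_subset
    have hxT' : x ∈ T' := by
      rw [hT', Finset.mem_sdiff]
      exact ⟨hX₀T hxX₀, fun h => (Finset.mem_erase.mp h).1 rfl⟩
    have hx₀T' : x₀ ∉ T' := by
      rw [hT', Finset.mem_sdiff]
      intro h
      exact h.2 (Finset.mem_erase.mpr ⟨hxne.symm, hx₀X₀⟩)
    set Q' : Finset (Fin n) := Q.erase i with hQ'
    have hQ'card : Q'.card = Q.card - 1 := Finset.card_erase_of_mem hiQ
    have hsum : ∀ j, ∑ g ∈ T', w j g = ∑ g ∈ T, w j g - ∑ g ∈ X₀.erase x, w j g := by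
      intro j
      have := Finset.sum_sdiff (f := w j) (s₁ := X₀.erase x) (s₂ := T) ((Finset.erase_subset x X₀).trans hX₀T)
      rw [← hT'] at this
      linarith
    have htot' : ∀ j ∈ Q', (Q'.card : ℝ) * μ j ≤ ∑ g ∈ T', w j g := by
      intro j hjQ'
      have hjQ : j ∈ Q := Finset.mem_of_mem_erase hjQ'
      have hc : (Q'.card : ℝ) = (Q.card : ℝ) - 1 := by
        rw [hQ'card, Nat.cast_sub (by omega)]
        simp
      rw [hsum j, hc]
      have h1 := htot j hjQ
      have h2 := hkey j hjQ
      have h3 := hμpos j hjQ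
      nlinarith
    obtain ⟨A', hA'1, hA'2, hA'anchor, hA'cnt, hA'dup⟩ :=
      ih Q' T' x (by omega) hxT'
        (fun j hj => hμpos j (Finset.mem_of_mem_erase hj))
        (fun j hj g hg => hsmall j (Finset.mem_of_mem_erase hj) g (hT'T hg))
        htot'
    set A : Fin n → Finset G := Function.update A' i X₀ with hA
    have hAi : A i = X₀ := Function.update_self i X₀ A'
    have hAj : ∀ j, j ≠ i → A j = A' j := fun j hj => Function.update_of_ne hj X₀ A'
    -- the filter identity
    have hfe : ∀ g : G, Q.filter (fun j => g ∈ A j) =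
        if g ∈ X₀ then insert i (Q'.filter (fun j => g ∈ A' j))
        else Q'.filter (fun j => g ∈ A' j) := by
      intro g
      split_ifs with hg
      · ext j
        simp only [Finset.mem_filter, Finset.mem_insert, hQ', Finset.mem_erase]
        constructor
        · rintro ⟨hjQ, hgA⟩
          by_cases hji : j = i
          · exact Or.inl hji
          · exact Or.inr ⟨⟨hji, hjQ⟩, by rwa [hAj j hji] at hgA⟩
        · rintro (rfl | ⟨⟨hji, hjQ⟩, hgA'⟩)
          · exact ⟨hiQ, by rwa [hAi]⟩
          · exact ⟨hjQ, by rwa [hAj j hji]⟩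
      · ext j
        simp only [Finset.mem_filter, hQ', Finset.mem_erase]
        constructor
        · rintro ⟨hjQ, hgA⟩
          by_cases hji : j = i
          · subst hji; rw [hAi] at hgA; exact absurd hgA hg
          · exact ⟨⟨hji, hjQ⟩, by rwa [hAj j hji] at hgA⟩
        · rintro ⟨⟨hji, hjQ⟩, hgA'⟩
          exact ⟨hjQ, by rwa [hAj j hji]⟩
    have hzero : ∀ g, g ∉ T' → Q'.filter (fun j => g ∈ A' j) = ∅ := by
      intro g hg
      rw [Finset.filter_false_of_mem]
      intro j hj hgA'
      exact hg ((hA'1 j hj).1 hgA')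
    refine ⟨A, ?_, ?_, ?_, ?_, ?_⟩
    · intro j hjQ
      by_cases hji : j = i
      · subst hji; rw [hAi]; exact ⟨hX₀T, hiv⟩
      · rw [hAj j hji]
        have hjQ' : j ∈ Q' := Finset.mem_erase.mpr ⟨hji, hjQ⟩
        exact ⟨(hA'1 j hjQ').1.trans hT'T, (hA'1 j hjQ').2⟩
    · intro j hjQ
      have hji : j ≠ i := fun h => hjQ (h ▸ hiQ)
      rw [hAj j hji]
      exact hA'2 j (fun h => hjQ (Finset.mem_of_mem_erase h))
    · -- anchor x₀ in at most one bundle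
      have hsub : Q.filter (fun j => x₀ ∈ A j) ⊆ {i} := by
        intro j hj
        rw [Finset.mem_filter] at hj
        obtain ⟨hjQ, hgA⟩ := hj
        by_contra hji
        rw [Finset.mem_singleton] at hji
        rw [hAj j hji] at hgA
        exact hx₀T' ((hA'1 j (Finset.mem_erase.mpr ⟨hji, hjQ⟩)).1 hgA)
      exact (Finset.card_le_card hsub).trans (by simp)
    · intro g
      rw [hfe g]
      split_ifs with hg
      · by_cases hgx : g = x
        · subst hgx
          have h1 := Finset.card_insert_le i (Q'.filter (fun j => g ∈ A' j))
          omega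
        · have hgT' : g ∉ T' := by
            rw [hT', Finset.mem_sdiff]
            intro h
            exact h.2 (Finset.mem_erase.mpr ⟨hgx, hg⟩)
          rw [hzero g hgT']
          simp
      · exact (hA'cnt g).trans (by omega)
    · have hsub : (Finset.univ : Finset G).filter
          (fun g : G => (Q.filter (fun j => g ∈ A j)).card = 2) ⊆
          insert x ((Finset.univ : Finset G).filter
            (fun g : G => (Q'.filter (fun j => g ∈ A' j)).card = 2)) := by
        intro g hg
        rw [Finset.mem_filter, hfe g] at hg
        obtain ⟨-, hg2⟩ := hg
        rw [Finset.mem_insert]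
        by_cases hgx : g = x
        · exact Or.inl hgx
        · right
          rw [Finset.mem_filter]
          refine ⟨Finset.mem_univ g, ?_⟩
          split_ifs at hg2 with hgX₀
          · exfalso
            have hgT' : g ∉ T' := by
              rw [hT', Finset.mem_sdiff]
              intro h
              exact h.2 (Finset.mem_erase.mpr ⟨hgx, hgX₀⟩)
            rw [hzero g hgT'] at hg2
            simp at hg2
          · exact hg2
      have h1 := Finset.card_le_card hsub
      have h2 := Finset.card_insert_le x ((Finset.univ : Finset G).filter
        (fun g : G => (Q'.filter (fun j => g ∈ A' j)).card = 2))
      omega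

end Line

section Stage

variable {G : Type*} [Fintype G] [DecidableEq G] {n : ℕ}

private lemma wsum_mono (w : G → ℝ) (hw : ∀ g, 0 ≤ w g) {X Y : Finset G} (h : X ⊆ Y) :
    ∑ g ∈ X, w g ≤ ∑ g ∈ Y, w g :=
  Finset.sum_le_sum_of_subset_of_nonneg h (fun g _ _ => hw g)

private lemma wsum_sdiff (w : G → ℝ) {X Y : Finset G} (h : Y ⊆ X) :
    ∑ g ∈ X \ Y, w g = ∑ g ∈ X, w g - ∑ g ∈ Y, w g := by
  have := Finset.sum_sdiff (f := w) (s₁ := Y) (s₂ := X) h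
  linarith

private lemma wsum_nonneg (w : G → ℝ) (hw : ∀ g, 0 ≤ w g) (X : Finset G) :
    0 ≤ ∑ g ∈ X, w g :=
  Finset.sum_nonneg (fun g _ => hw g)

lemma stage12 (w : Fin n → G → ℝ) (hw : ∀ i g, 0 ≤ w i g) (μ : Fin n → ℝ) :
    ∀ N : ℕ, ∀ (R : Finset (Fin n)) (S : Finset G), R.card ≤ N →
    (∀ j ∈ R, 0 < μ j) →
    (∀ j ∈ R, ∃ 𝒞 : Finset (Finset G), R.card ≤ 𝒞.card ∧ (∀ b ∈ 𝒞, b ⊆ S) ∧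
      (∀ b ∈ 𝒞, ∀ c ∈ 𝒞, b ≠ c → Disjoint b c) ∧
      (∀ b ∈ 𝒞, μ j ≤ ∑ g ∈ b, w j g)) →
    ∃ A : Fin n → Finset G,
      (∀ j ∈ R, μ j ≤ ∑ g ∈ A j, w j g) ∧
      (∀ j, A j ⊆ S) ∧
      (∀ j ∉ R, A j = ∅) ∧
      (∀ g : G, (R.filter (fun j => g ∈ A j)).card ≤ 2) ∧
      ((Finset.univ : Finset G).filter
        (fun g : G => (R.filter (fun j => g ∈ A j)).card = 2)).card ≤ R.card - 2 := by
  intro N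
  induction N with
  | zero =>
    intro R S hRN _ _
    have hR : R = ∅ := Finset.card_eq_zero.mp (Nat.le_zero.mp hRN)
    subst hR
    exact ⟨fun _ => ∅, by simp, by simp, by simp, by simp, by simp⟩
  | succ N ih =>
    intro R S hRN hμpos hstruct
    rcases Finset.eq_empty_or_nonempty R with rfl | hRne
    · exact ⟨fun _ => ∅, by simp, by simp, by simp, by simp, by simp⟩
    classical
    by_cases hbig : ∃ i ∈ R, ∃ g ∈ S, μ i ≤ w i g
    · -- give a single valuable good to agent i and recurse
      obtain ⟨i, hiR, g, hgS, hig⟩ := hbig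
      set R' : Finset (Fin n) := R.erase i with hR'
      set S' : Finset G := S.erase g with hS'
      have hstruct' : ∀ j ∈ R', ∃ 𝒞 : Finset (Finset G), R'.card ≤ 𝒞.card ∧
          (∀ b ∈ 𝒞, b ⊆ S') ∧ (∀ b ∈ 𝒞, ∀ c ∈ 𝒞, b ≠ c → Disjoint b c) ∧
          (∀ b ∈ 𝒞, μ j ≤ ∑ g ∈ b, w j g) := by
        intro j hjR'
        obtain ⟨𝒞, hc1, hc2, hc3, hc4⟩ := hstruct j (Finset.mem_of_mem_erase hjR')
        refine ⟨𝒞.filter (fun b => g ∉ b), ?_, ?_, ?_, ?_⟩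
        · -- at most one bundle contains g
          have hone : (𝒞.filter (fun b => g ∈ b)).card ≤ 1 := by
            rw [Finset.card_le_one]
            intro b hb c hc
            rw [Finset.mem_filter] at hb hc
            by_contra hbc
            exact Finset.disjoint_left.mp (hc3 b hb.1 c hc.1 hbc) hb.2 hc.2
          have hsplit : (𝒞.filter (fun b => g ∈ b)).card + (𝒞.filter (fun b => g ∉ b)).card = 𝒞.card := by
            simpa using Finset.card_filter_add_card_filter_not
              (s := 𝒞) (p := fun b => g ∈ b)
          have hcard' : R'.card = R.card - 1 := Finset.card_erase_of_mem hiR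
          omega
        · intro b hb
          rw [Finset.mem_filter] at hb
          rw [hS', Finset.subset_erase]
          exact ⟨hc2 b hb.1, hb.2⟩
        · intro b hb c hc hbc
          rw [Finset.mem_filter] at hb hc
          exact hc3 b hb.1 c hc.1 hbc
        · intro b hb
          rw [Finset.mem_filter] at hb
          exact hc4 b hb.1
      have hR'N : R'.card ≤ N := by
        have : R'.card = R.card - 1 := Finset.card_erase_of_mem hiR
        have : 1 ≤ R.card := Finset.card_pos.mpr hRne
        omega
      obtain ⟨A', hA'1, hA'2, hA'3, hA'4, hA'5⟩ := ih R' S' hR'N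
        (fun j hj => hμpos j (Finset.mem_of_mem_erase hj)) hstruct'
      set A : Fin n → Finset G := Function.update A' i {g} with hA
      have hAi : A i = {g} := Function.update_self i {g} A'
      have hAj : ∀ j, j ≠ i → A j = A' j := fun j hj => Function.update_of_ne hj {g} A'
      have hfe : ∀ g₀ : G, R.filter (fun j => g₀ ∈ A j) =
          if g₀ ∈ ({g} : Finset G) then insert i (R'.filter (fun j => g₀ ∈ A' j))
          else R'.filter (fun j => g₀ ∈ A' j) := by
        intro g₀
        split_ifs with hg₀
        · ext j
          simp only [Finset.mem_filter, Finset.mem_insert, hR', Finset.mem_erase]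
          constructor
          · rintro ⟨hjR, hgA⟩
            by_cases hji : j = i
            · exact Or.inl hji
            · exact Or.inr ⟨⟨hji, hjR⟩, by rwa [hAj j hji] at hgA⟩
          · rintro (rfl | ⟨⟨hji, hjR⟩, hgA'⟩)
            · exact ⟨hiR, by rwa [hAi]⟩
            · exact ⟨hjR, by rwa [hAj j hji]⟩
        · ext j
          simp only [Finset.mem_filter, hR', Finset.mem_erase]
          constructor
          · rintro ⟨hjR, hgA⟩
            by_cases hji : j = i
            · subst hji; rw [hAi] at hgA; exact absurd hgA hg₀
            · exact ⟨⟨hji, hjR⟩, by rwa [hAj j hji] at hgA⟩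
          · rintro ⟨⟨hji, hjR⟩, hgA'⟩
            exact ⟨hjR, by rwa [hAj j hji]⟩
      have hzero : ∀ g₀, g₀ ∉ S' → R'.filter (fun j => g₀ ∈ A' j) = ∅ := by
        intro g₀ hg₀
        rw [Finset.filter_false_of_mem]
        intro j hj hgA'
        exact hg₀ (hA'2 j hgA')
      refine ⟨A, ?_, ?_, ?_, ?_, ?_⟩
      · intro j hjR
        by_cases hji : j = i
        · subst hji; rw [hAi, Finset.sum_singleton]; exact hig
        · rw [hAj j hji]
          exact hA'1 j (Finset.mem_erase.mpr ⟨hji, hjR⟩)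
      · intro j
        by_cases hji : j = i
        · subst hji; rw [hAi]; simpa using hgS
        · rw [hAj j hji]
          exact (hA'2 j).trans (Finset.erase_subset _ _)
      · intro j hjR
        have hji : j ≠ i := fun h => hjR (h ▸ hiR)
        rw [hAj j hji]
        exact hA'3 j (fun h => hjR (Finset.mem_of_mem_erase h))
      · intro g₀
        rw [hfe g₀]
        split_ifs with hg₀
        · rw [Finset.mem_singleton] at hg₀
          subst hg₀
          have : g₀ ∉ S' := by simp [hS']
          rw [hzero g₀ this]
          simp
        · exact (hA'4 g₀).trans (by omega)
      · have hsub : (Finset.univ : Finset G).filter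
            (fun g₀ : G => (R.filter (fun j => g₀ ∈ A j)).card = 2) ⊆
            (Finset.univ : Finset G).filter
              (fun g₀ : G => (R'.filter (fun j => g₀ ∈ A' j)).card = 2) := by
          intro g₀ hg₀
          rw [Finset.mem_filter, hfe g₀] at hg₀
          obtain ⟨-, hg2⟩ := hg₀
          rw [Finset.mem_filter]
          refine ⟨Finset.mem_univ g₀, ?_⟩
          split_ifs at hg2 with hgg
          · exfalso
            rw [Finset.mem_singleton] at hgg
            subst hgg
            rw [hzero g₀ (by simp [hS'])] at hg2
            simp at hg2
          · exact hg2
        have h1 := Finset.card_le_card hsub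
        have h2 : R'.card = R.card - 1 := Finset.card_erase_of_mem hiR
        have h3 : 1 ≤ R.card := Finset.card_pos.mpr hRne
        omega
    · -- no agent values a single remaining good at her share : divider structure
      push_neg at hbig
      have hsmall : ∀ i ∈ R, ∀ g ∈ S, w i g < μ i := hbig
      obtain ⟨i₀, hi₀R⟩ := hRne
      set d : ℕ := R.card with hd
      have hd1 : 1 ≤ d := Finset.card_pos.mpr ⟨i₀, hi₀R⟩
      obtain ⟨𝒞, hc1, hc2, hc3, hc4⟩ := hstruct i₀ hi₀R
      obtain ⟨𝒞', h𝒞'sub, h𝒞'card⟩ := Finset.exists_subset_card_eq hc1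
      have hc2' : ∀ b ∈ 𝒞', b ⊆ S := fun b hb => hc2 b (h𝒞'sub hb)
      have hc3' : ∀ b ∈ 𝒞', ∀ c ∈ 𝒞', b ≠ c → Disjoint b c :=
        fun b hb c hc => hc3 b (h𝒞'sub hb) c (h𝒞'sub hc)
      have hc4' : ∀ b ∈ 𝒞', μ i₀ ≤ ∑ g ∈ b, w i₀ g := fun b hb => hc4 b (h𝒞'sub hb)
      obtain ⟨bs, hbs⟩ : 𝒞'.Nonempty := Finset.card_pos.mp (by omega)
      have hbsne : bs.Nonempty := by
        rw [Finset.nonempty_iff_ne_empty]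
        intro h
        have := hc4' bs hbs
        rw [h] at this
        simp at this
        exact absurd this (not_le.mpr (hμpos i₀ hi₀R))
      set bpad : Finset G := bs ∪ (S \ 𝒞'.biUnion id) with hbpad
      set B : Finset (Finset G) := insert bpad (𝒞'.erase bs) with hB
      have hpadS : bpad ⊆ S := by
        rw [hbpad]
        exact Finset.union_subset (hc2' bs hbs) (Finset.sdiff_subset)
      have hBS : ∀ b ∈ B, b ⊆ S := by
        intro b hb
        rw [hB, Finset.mem_insert] at hb
        rcases hb with rfl | hb
        · exact hpadS
        · exact hc2' b (Finset.erase_subset _ _ hb)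
      have hBdisj : ∀ b ∈ B, ∀ c ∈ B, b ≠ c → Disjoint b c := by
        have hpadc : ∀ c ∈ 𝒞'.erase bs, Disjoint bpad c := by
          intro c hc
          rw [Finset.mem_erase] at hc
          rw [hbpad, Finset.disjoint_union_left]
          constructor
          · exact hc3' bs hbs c hc.2 (fun h => hc.1 h.symm)
          · refine Finset.disjoint_left.mpr ?_
            intro a ha hac
            rw [Finset.mem_sdiff] at ha
            exact ha.2 (Finset.mem_biUnion.mpr ⟨c, hc.2, hac⟩)
        intro b hb c hc hbc
        rw [hB, Finset.mem_insert] at hb hc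
        rcases hb with rfl | hb
        · rcases hc with rfl | hc
          · exact absurd rfl hbc
          · exact hpadc c hc
        · rcases hc with rfl | hc
          · exact (hpadc b hb).symm
          · exact hc3' b (Finset.erase_subset _ _ hb) c (Finset.erase_subset _ _ hc) hbc
      have hBval : ∀ b ∈ B, μ i₀ ≤ ∑ g ∈ b, w i₀ g := by
        intro b hb
        rw [hB, Finset.mem_insert] at hb
        rcases hb with rfl | hb
        · refine (hc4' bs hbs).trans ?_
          exact wsum_mono (w i₀) (hw i₀) (by rw [hbpad]; exact Finset.subset_union_left)
        · exact hc4' b (Finset.erase_subset _ _ hb)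
      have hpadnot : bpad ∉ 𝒞'.erase bs := by
        intro h
        have hdisj := by
          have hc := Finset.mem_erase.mp h
          exact hc3' bs hbs bpad hc.2 (fun he => hc.1 he.symm)
        have hbssub : bs ⊆ bpad := by rw [hbpad]; exact Finset.subset_union_left
        obtain ⟨a, ha⟩ := hbsne
        exact Finset.disjoint_left.mp hdisj ha (hbssub ha)
      have hBcard : B.card = d := by
        rw [hB, Finset.card_insert_of_notMem hpadnot, Finset.card_erase_of_mem hbs, h𝒞'card]
        omega
      have hBun : B.biUnion id = S := by
        apply Finset.Subset.antisymm
        · intro a ha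
          rw [Finset.mem_biUnion] at ha
          obtain ⟨b, hb, hab⟩ := ha
          exact hBS b hb hab
        · intro a ha
          rw [Finset.mem_biUnion]
          by_cases hain : a ∈ 𝒞'.biUnion id
          · rw [Finset.mem_biUnion] at hain
            obtain ⟨c, hc, hac⟩ := hain
            by_cases hcbs : c = bs
            · subst hcbs
              exact ⟨bpad, Finset.mem_insert_self _ _, by
                rw [hbpad]; exact Finset.mem_union_left _ hac⟩
            · exact ⟨c, Finset.mem_insert_of_mem (Finset.mem_erase.mpr ⟨hcbs, hc⟩), hac⟩
          · exact ⟨bpad, Finset.mem_insert_self _ _, by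
              rw [hbpad]; exact Finset.mem_union_right _ (Finset.mem_sdiff.mpr ⟨ha, hain⟩)⟩
      have hBsum : ∀ j, ∑ g ∈ S, w j g = ∑ b ∈ B, ∑ g ∈ b, w j g := by
        intro j
        rw [← hBun]
        exact Finset.sum_biUnion (fun b hb c hc hbc => hBdisj b hb c hc hbc)
      have htotS : ∀ j ∈ R, (d : ℝ) * μ j ≤ ∑ g ∈ S, w j g := by
        intro j hjR
        obtain ⟨𝒟, hd1', hd2, hd3, hd4⟩ := hstruct j hjR
        have hsum1 : ∑ b ∈ 𝒟, ∑ g ∈ b, w j g ≤ ∑ g ∈ S, w j g := by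
          rw [show ∑ b ∈ 𝒟, ∑ g ∈ b, w j g = ∑ g ∈ 𝒟.biUnion id, w j g from
            (Finset.sum_biUnion (fun b hb c hc hbc => hd3 b hb c hc hbc)).symm]
          refine wsum_mono (w j) (hw j) ?_
          intro a ha
          rw [Finset.mem_biUnion] at ha
          obtain ⟨b, hb, hab⟩ := ha
          exact hd2 b hb hab
        have hsum2 : (𝒟.card : ℝ) * μ j ≤ ∑ b ∈ 𝒟, ∑ g ∈ b, w j g := by
          have := Finset.card_nsmul_le_sum 𝒟 (fun b => ∑ g ∈ b, w j g) (μ j) hd4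
          rwa [nsmul_eq_mul] at this
        have hcast : (d : ℝ) ≤ (𝒟.card : ℝ) := by exact_mod_cast hd1'
        nlinarith [hμpos j hjR]
      have hlikes : ∀ j ∈ R, ∃ b ∈ B, μ j ≤ ∑ g ∈ b, w j g := by
        intro j hjR
        by_contra hcon
        push_neg at hcon
        have hBne : B.Nonempty := ⟨bpad, by rw [hB]; exact Finset.mem_insert_self _ _⟩
        have hlt : ∑ b ∈ B, ∑ g ∈ b, w j g < ∑ b ∈ B, μ j :=
          Finset.sum_lt_sum_of_nonempty hBne (fun b hb => hcon b hb)
        rw [Finset.sum_const, nsmul_eq_mul, hBcard] at hlt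
        have := htotS j hjR
        rw [hBsum j] at this
        linarith
      -- Hall structure on the non-divider agents
      letI : ∀ (a : Fin n) (b : Finset G), Decidable (μ a ≤ ∑ g ∈ b, w a g) :=
        fun a b => Classical.dec _
      have hAcard : (R.erase i₀).card = d - 1 := Finset.card_erase_of_mem hi₀R
      rcases hall_struct (fun (j : Fin n) (b : Finset G) => μ j ≤ ∑ g ∈ b, w j g)
          (R.erase i₀).card (R.erase i₀) B le_rfl
          (fun j hj => hlikes j (Finset.mem_of_mem_erase hj))
          (by omega) with ⟨b, hbB, hbunliked⟩ | ⟨W, f, hWA, hWne, hinj, hfm, hclosed⟩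
      · -- divider takes the unliked bundle, everyone else on the line
        set Q : Finset (Fin n) := R.erase i₀ with hQ
        set T : Finset G := S \ b with hT
        have hbS : b ⊆ S := hBS b hbB
        have htotT : ∀ j ∈ Q, (Q.card : ℝ) * μ j ≤ ∑ g ∈ T, w j g := by
          intro j hjQ
          have hjR : j ∈ R := Finset.mem_of_mem_erase hjQ
          rw [hT, wsum_sdiff (w j) hbS]
          have h1 := htotS j hjR
          have h2 : ∑ g ∈ b, w j g < μ j := not_le.mp (hbunliked j hjQ)
          have hc : (Q.card : ℝ) = (d : ℝ) - 1 := by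
            rw [hQ, hAcard, Nat.cast_sub hd1]; simp
          rw [hc]
          linarith
        rcases Finset.eq_empty_or_nonempty Q with hQe | hQne
        · -- only the divider remains
          refine ⟨fun j => if j = i₀ then b else ∅, ?_, ?_, ?_, ?_, ?_⟩
          · intro j hjR
            have : j = i₀ := by
              by_contra hji
              exact absurd (Finset.mem_erase.mpr ⟨hji, hjR⟩) (by rw [← hQ, hQe]; simp)
            subst this
            simp only [eq_self_iff_true, if_true]
            exact hBval b hbB
          · intro j
            by_cases hji : j = i₀
            · simp only [if_pos hji]; exact hbS
            · simp only [if_neg hji]; exact Finset.empty_subset _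
          · intro j hjR
            have hji : j ≠ i₀ := by rintro rfl; exact hjR hi₀R
            simp only [if_neg hji]
          · intro g₀
            refine (Finset.card_le_card (Finset.filter_subset _ _)).trans ?_
            have : R = {i₀} := by
              apply Finset.eq_singleton_iff_unique_mem.mpr
              refine ⟨hi₀R, fun j hj => ?_⟩
              by_contra hji
              exact absurd (Finset.mem_erase.mpr ⟨hji, hj⟩) (by rw [← hQ, hQe]; simp)
            rw [this]
            simp
          · have hRcard : R.card = 1 := by
              have h0 : Q.card = 0 := by rw [hQe]; simp
              omega
            have : ∀ g₀ : G, ((R.filter (fun j => g₀ ∈ if j = i₀ then b else ∅)).card = 2) → False := by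
              intro g₀ h
              have := (Finset.card_le_card (Finset.filter_subset
                (fun j => g₀ ∈ if j = i₀ then b else ∅) R))
              omega
            rw [Finset.filter_false_of_mem (fun g₀ _ => this g₀)]
            simp
        · -- line for the others
          have hTne : T.Nonempty := by
            rw [Finset.nonempty_iff_ne_empty]
            intro hTe
            obtain ⟨j, hjQ⟩ := hQne
            have := htotT j hjQ
            rw [hTe] at this
            simp at this
            have hQpos : 0 < (Q.card : ℝ) := by
              exact_mod_cast Finset.card_pos.mpr ⟨j, hjQ⟩
            nlinarith [hμpos j (Finset.mem_of_mem_erase hjQ)]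
          obtain ⟨x₀, hx₀T⟩ := hTne
          obtain ⟨A', hA'1, hA'2, _, hA'cnt, hA'dup⟩ :=
            line_lemma w hw μ Q.card Q T x₀ le_rfl hx₀T
              (fun j hj => hμpos j (Finset.mem_of_mem_erase hj))
              (fun j hj g hg => hsmall j (Finset.mem_of_mem_erase hj) g (Finset.mem_sdiff.mp hg).1)
              htotT
          set A : Fin n → Finset G := Function.update A' i₀ b with hA
          have hAi : A i₀ = b := Function.update_self i₀ b A'
          have hAj : ∀ j, j ≠ i₀ → A j = A' j := fun j hj => Function.update_of_ne hj b A'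
          have hfe : ∀ g₀ : G, R.filter (fun j => g₀ ∈ A j) =
              if g₀ ∈ b then insert i₀ (Q.filter (fun j => g₀ ∈ A' j))
              else Q.filter (fun j => g₀ ∈ A' j) := by
            intro g₀
            split_ifs with hg₀
            · ext j
              simp only [Finset.mem_filter, Finset.mem_insert, hQ, Finset.mem_erase]
              constructor
              · rintro ⟨hjR, hgA⟩
                by_cases hji : j = i₀
                · exact Or.inl hji
                · exact Or.inr ⟨⟨hji, hjR⟩, by rwa [hAj j hji] at hgA⟩
              · rintro (rfl | ⟨⟨hji, hjR⟩, hgA'⟩)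
                · exact ⟨hi₀R, by rwa [hAi]⟩
                · exact ⟨hjR, by rwa [hAj j hji]⟩
            · ext j
              simp only [Finset.mem_filter, hQ, Finset.mem_erase]
              constructor
              · rintro ⟨hjR, hgA⟩
                by_cases hji : j = i₀
                · subst hji; rw [hAi] at hgA; exact absurd hgA hg₀
                · exact ⟨⟨hji, hjR⟩, by rwa [hAj j hji] at hgA⟩
              · rintro ⟨⟨hji, hjR⟩, hgA'⟩
                exact ⟨hjR, by rwa [hAj j hji]⟩
          have hzero : ∀ g₀, g₀ ∈ b → Q.filter (fun j => g₀ ∈ A' j) = ∅ := by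
            intro g₀ hg₀
            rw [Finset.filter_false_of_mem]
            intro j hj hgA'
            have := (hA'1 j hj).1 hgA'
            rw [hT, Finset.mem_sdiff] at this
            exact this.2 hg₀
          refine ⟨A, ?_, ?_, ?_, ?_, ?_⟩
          · intro j hjR
            by_cases hji : j = i₀
            · subst hji; rw [hAi]; exact hBval b hbB
            · rw [hAj j hji]
              exact (hA'1 j (Finset.mem_erase.mpr ⟨hji, hjR⟩)).2
          · intro j
            by_cases hji : j = i₀
            · subst hji; rw [hAi]; exact hbS
            · rw [hAj j hji]
              by_cases hjQ : j ∈ Q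
              · exact ((hA'1 j hjQ).1).trans (Finset.sdiff_subset)
              · rw [hA'2 j hjQ]; exact Finset.empty_subset _
          · intro j hjR
            have hji : j ≠ i₀ := fun h => hjR (h ▸ hi₀R)
            rw [hAj j hji]
            exact hA'2 j (fun h => hjR (Finset.mem_of_mem_erase h))
          · intro g₀
            rw [hfe g₀]
            split_ifs with hg₀
            · rw [hzero g₀ hg₀]; simp
            · exact (hA'cnt g₀).trans (by omega)
          · have hsub : (Finset.univ : Finset G).filter
                (fun g₀ : G => (R.filter (fun j => g₀ ∈ A j)).card = 2) ⊆
                (Finset.univ : Finset G).filter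
                  (fun g₀ : G => (Q.filter (fun j => g₀ ∈ A' j)).card = 2) := by
              intro g₀ hg₀
              rw [Finset.mem_filter, hfe g₀] at hg₀
              obtain ⟨-, hg2⟩ := hg₀
              rw [Finset.mem_filter]
              refine ⟨Finset.mem_univ g₀, ?_⟩
              split_ifs at hg2 with hgb
              · exfalso
                rw [hzero g₀ hgb] at hg2
                simp at hg2
              · exact hg2
            have h1 := Finset.card_le_card hsub
            have h2 : Q.card = d - 1 := hAcard
            omega
      · -- matched agents receive bundles, the rest (with the divider) go on the line
        set U : Finset G := W.biUnion f with hU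
        set T : Finset G := S \ U with hT
        set Q : Finset (Fin n) := insert i₀ ((R.erase i₀) \ W) with hQ
        have hWR : W ⊆ R := hWA.trans (Finset.erase_subset _ _)
        have hi₀W : i₀ ∉ W := fun h => (Finset.mem_erase.mp (hWA h)).1 rfl
        have hi₀diff : i₀ ∉ (R.erase i₀) \ W := fun h =>
          (Finset.mem_erase.mp (Finset.mem_sdiff.mp h).1).1 rfl
        have hWcard : 1 ≤ W.card := Finset.card_pos.mpr hWne
        have hWcard' : W.card ≤ d - 1 := by
          have := Finset.card_le_card hWA
          omega
        have hQcard : Q.card = d - W.card := by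
          rw [hQ, Finset.card_insert_of_notMem hi₀diff, Finset.card_sdiff_of_subset hWA, hAcard]
          omega
        have hfdisj : ∀ x ∈ W, ∀ y ∈ W, x ≠ y → Disjoint (f x) (f y) := by
          intro x hx y hy hxy
          refine hBdisj (f x) (hfm x hx).1 (f y) (hfm y hy).1 ?_
          intro hfe
          exact hxy (hinj (Finset.mem_coe.mpr hx) (Finset.mem_coe.mpr hy) hfe)
        have hUS : U ⊆ S := by
          intro a ha
          rw [hU, Finset.mem_biUnion] at ha
          obtain ⟨x, hx, hax⟩ := ha
          exact hBS (f x) (hfm x hx).1 hax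
        have hsumU : ∀ j, ∑ g ∈ U, w j g = ∑ x ∈ W, ∑ g ∈ f x, w j g := by
          intro j
          rw [hU]
          exact Finset.sum_biUnion (fun x hx y hy hxy => hfdisj x hx y hy hxy)
        have htotT : ∀ j ∈ Q, (Q.card : ℝ) * μ j ≤ ∑ g ∈ T, w j g := by
          intro j hjQ
          rw [hQ, Finset.mem_insert] at hjQ
          rw [hT, wsum_sdiff (w j) hUS, hQcard]
          have hcast : ((d - W.card : ℕ) : ℝ) = (d : ℝ) - (W.card : ℝ) := by
            rw [Nat.cast_sub (by omega)]
          rw [hcast]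
          rcases hjQ with rfl | hjdiff
          · -- divider : the untouched bundles live inside T
            set C : Finset (Finset G) := B \ W.image f with hC
            have himcard : (W.image f).card = W.card := Finset.card_image_of_injOn hinj
            have himsub : W.image f ⊆ B := by
              intro b hb
              rw [Finset.mem_image] at hb
              obtain ⟨x, hx, rfl⟩ := hb
              exact (hfm x hx).1
            have hCcard : C.card = d - W.card := by
              rw [hC, Finset.card_sdiff_of_subset himsub, hBcard, himcard]
            have hCsubT : ∀ c ∈ C, c ⊆ T := by
              intro c hc
              rw [hC, Finset.mem_sdiff] at hc
              intro a hac
              rw [hT, Finset.mem_sdiff]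
              refine ⟨hBS c hc.1 hac, ?_⟩
              intro haU
              rw [hU, Finset.mem_biUnion] at haU
              obtain ⟨x, hx, hax⟩ := haU
              have hne : c ≠ f x := by
                intro he
                exact hc.2 (he ▸ Finset.mem_image_of_mem f hx)
              exact Finset.disjoint_left.mp
                (hBdisj c hc.1 (f x) (hfm x hx).1 hne) hac hax
            have hCdisj : ∀ b ∈ C, ∀ c ∈ C, b ≠ c → Disjoint b c := by
              intro b hb c hc hbc
              rw [hC, Finset.mem_sdiff] at hb hc
              exact hBdisj b hb.1 c hc.1 hbc
            have h1 : ∑ c ∈ C, ∑ g ∈ c, w j g ≤ ∑ g ∈ S \ U, w j g := by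
              rw [show ∑ c ∈ C, ∑ g ∈ c, w j g = ∑ g ∈ C.biUnion id, w j g from
                (Finset.sum_biUnion (fun b hb c hc hbc => hCdisj b hb c hc hbc)).symm]
              refine wsum_mono (w j) (hw j) ?_
              intro a ha
              rw [Finset.mem_biUnion] at ha
              obtain ⟨c, hc, hac⟩ := ha
              have := hCsubT c hc hac
              rwa [hT] at this
            have h2 : ((d - W.card : ℕ) : ℝ) * μ j ≤ ∑ c ∈ C, ∑ g ∈ c, w j g := by
              have := Finset.card_nsmul_le_sum C (fun c => ∑ g ∈ c, w j g) (μ j)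
                (fun c hc => hBval c (Finset.mem_sdiff.mp (hC ▸ hc)).1)
              rw [nsmul_eq_mul, hCcard] at this
              exact this
            rw [hcast] at h2
            have h3 : ∑ g ∈ S \ U, w j g = ∑ g ∈ S, w j g - ∑ g ∈ U, w j g :=
              wsum_sdiff (w j) hUS
            linarith
          · -- non-divider line agent : dislikes all matched bundles
            have hjR : j ∈ R := Finset.mem_of_mem_erase (Finset.mem_sdiff.mp hjdiff).1
            have hjW : j ∉ W := (Finset.mem_sdiff.mp hjdiff).2
            have hdislike : ∀ x ∈ W, ∑ g ∈ f x, w j g < μ j := by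
              intro x hx
              by_contra hcon
              push_neg at hcon
              exact hjW (hclosed j (Finset.mem_sdiff.mp hjdiff).1 x hx hcon)
            have hUsmall : ∑ g ∈ U, w j g < (W.card : ℝ) * μ j := by
              rw [hsumU j]
              have := Finset.sum_lt_sum_of_nonempty hWne hdislike
              rw [Finset.sum_const, nsmul_eq_mul] at this
              linarith
            have := htotS j hjR
            linarith
        have hTne : T.Nonempty := by
          rw [Finset.nonempty_iff_ne_empty]
          intro hTe
          have hi₀Q : i₀ ∈ Q := by rw [hQ]; exact Finset.mem_insert_self _ _
          have := htotT i₀ hi₀Q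
          rw [hTe] at this
          simp at this
          have hQpos : 0 < (Q.card : ℝ) := by
            have : 0 < Q.card := by rw [hQcard]; omega
            exact_mod_cast this
          nlinarith [hμpos i₀ hi₀R]
        obtain ⟨x₀, hx₀T⟩ := hTne
        obtain ⟨A', hA'1, hA'2, _, hA'cnt, hA'dup⟩ :=
          line_lemma w hw μ Q.card Q T x₀ le_rfl hx₀T
            (fun j hj => hμpos j (by
              rw [hQ, Finset.mem_insert] at hj
              rcases hj with rfl | hj
              · exact hi₀R
              · exact Finset.mem_of_mem_erase (Finset.mem_sdiff.mp hj).1))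
            (fun j hj g hg => hsmall j (by
              rw [hQ, Finset.mem_insert] at hj
              rcases hj with rfl | hj
              · exact hi₀R
              · exact Finset.mem_of_mem_erase (Finset.mem_sdiff.mp hj).1) g
              (Finset.mem_sdiff.mp hg).1)
            htotT
        set A : Fin n → Finset G := fun j => if j ∈ W then f j else A' j with hA
        have hQR : Q ⊆ R := by
          rw [hQ]
          intro j hj
          rw [Finset.mem_insert] at hj
          rcases hj with rfl | hj
          · exact hi₀R
          · exact Finset.mem_of_mem_erase (Finset.mem_sdiff.mp hj).1
        have hRWQ : ∀ j ∈ R, j ∈ W ∨ j ∈ Q := by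
          intro j hjR
          by_cases hjW : j ∈ W
          · exact Or.inl hjW
          · right
            rw [hQ, Finset.mem_insert]
            by_cases hji : j = i₀
            · exact Or.inl hji
            · exact Or.inr (Finset.mem_sdiff.mpr ⟨Finset.mem_erase.mpr ⟨hji, hjR⟩, hjW⟩)
        have hQW : ∀ j ∈ Q, j ∉ W := by
          intro j hj
          rw [hQ, Finset.mem_insert] at hj
          rcases hj with rfl | hj
          · exact hi₀W
          · exact (Finset.mem_sdiff.mp hj).2
        have hAW : ∀ j ∈ W, A j = f j := by
          intro j hj; rw [hA]; simp only [if_pos hj]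
        have hAQ : ∀ j, j ∉ W → A j = A' j := by
          intro j hj; rw [hA]; simp only [if_neg hj]
        -- counting helper
        have hfe : ∀ g₀ : G, R.filter (fun j => g₀ ∈ A j) =
            (W.filter (fun j => g₀ ∈ f j)) ∪ (Q.filter (fun j => g₀ ∈ A' j)) := by
          intro g₀
          ext j
          simp only [Finset.mem_filter, Finset.mem_union]
          constructor
          · rintro ⟨hjR, hgA⟩
            by_cases hjW : j ∈ W
            · left; exact ⟨hjW, by rwa [hAW j hjW] at hgA⟩
            · right
              rcases hRWQ j hjR with h | h
              · exact absurd h hjW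
              · exact ⟨h, by rwa [hAQ j hjW] at hgA⟩
          · rintro (⟨hjW, hg⟩ | ⟨hjQ, hg⟩)
            · exact ⟨hWR hjW, by rwa [hAW j hjW]⟩
            · exact ⟨hQR hjQ, by rwa [hAQ j (hQW j hjQ)]⟩
        have hWQfdisj : ∀ g₀ : G, Disjoint (W.filter (fun j => g₀ ∈ f j))
            (Q.filter (fun j => g₀ ∈ A' j)) := by
          intro g₀
          refine Finset.disjoint_left.mpr ?_
          intro j hj1 hj2
          exact hQW j (Finset.mem_filter.mp hj2).1 (Finset.mem_filter.mp hj1).1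
        have hWcnt : ∀ g₀ : G, (W.filter (fun j => g₀ ∈ f j)).card ≤ 1 := by
          intro g₀
          rw [Finset.card_le_one]
          intro a ha b hb
          rw [Finset.mem_filter] at ha hb
          by_contra hab
          exact Finset.disjoint_left.mp (hfdisj a ha.1 b hb.1 hab) ha.2 hb.2
        have hcnt : ∀ g₀ : G, (R.filter (fun j => g₀ ∈ A j)).card =
            (W.filter (fun j => g₀ ∈ f j)).card + (Q.filter (fun j => g₀ ∈ A' j)).card := by
          intro g₀
          rw [hfe g₀]
          exact Finset.card_union_of_disjoint (hWQfdisj g₀)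
        have hsplitcases : ∀ g₀ : G, (g₀ ∈ U → (Q.filter (fun j => g₀ ∈ A' j)).card = 0) ∧
            (g₀ ∉ U → (W.filter (fun j => g₀ ∈ f j)).card = 0) := by
          intro g₀
          constructor
          · intro hgU
            rw [Finset.card_eq_zero, Finset.filter_false_of_mem]
            intro j hj hgA'
            have := (hA'1 j hj).1 hgA'
            rw [hT, Finset.mem_sdiff] at this
            exact this.2 hgU
          · intro hgU
            rw [Finset.card_eq_zero, Finset.filter_false_of_mem]
            intro j hj hgf
            exact hgU (by rw [hU]; exact Finset.mem_biUnion.mpr ⟨j, hj, hgf⟩)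
        refine ⟨A, ?_, ?_, ?_, ?_, ?_⟩
        · intro j hjR
          rcases hRWQ j hjR with h | h
          · rw [hAW j h]; exact (hfm j h).2
          · rw [hAQ j (hQW j h)]; exact (hA'1 j h).2
        · intro j
          by_cases hjW : j ∈ W
          · rw [hAW j hjW]; exact hBS (f j) (hfm j hjW).1
          · rw [hAQ j hjW]
            by_cases hjQ : j ∈ Q
            · exact ((hA'1 j hjQ).1).trans (Finset.sdiff_subset)
            · rw [hA'2 j hjQ]; exact Finset.empty_subset _
        · intro j hjR
          have hjW : j ∉ W := fun h => hjR (hWR h)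
          rw [hAQ j hjW]
          exact hA'2 j (fun h => hjR (hQR h))
        · intro g₀
          rw [hcnt g₀]
          by_cases hgU : g₀ ∈ U
          · rw [(hsplitcases g₀).1 hgU]
            have := hWcnt g₀
            omega
          · rw [(hsplitcases g₀).2 hgU]
            have := hA'cnt g₀
            omega
        · have hsub : (Finset.univ : Finset G).filter
              (fun g₀ : G => (R.filter (fun j => g₀ ∈ A j)).card = 2) ⊆
              (Finset.univ : Finset G).filter
                (fun g₀ : G => (Q.filter (fun j => g₀ ∈ A' j)).card = 2) := by
            intro g₀ hg₀
            rw [Finset.mem_filter] at hg₀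
            obtain ⟨-, hg2⟩ := hg₀
            rw [hcnt g₀] at hg2
            rw [Finset.mem_filter]
            refine ⟨Finset.mem_univ g₀, ?_⟩
            by_cases hgU : g₀ ∈ U
            · exfalso
              have h1 := (hsplitcases g₀).1 hgU
              have h2 := hWcnt g₀
              omega
            · have h1 := (hsplitcases g₀).2 hgU
              omega
          have h1 := Finset.card_le_card hsub
          have h2 := hA'dup
          rw [hQcard] at h2
          omega

end Stage

/-- Every instance with `n ≥ 2` agents and additive valuations (weights `w i`)
admits an allocation with copies giving each agent her MMS, such that every good belongs to
at most two bundles and at most `n - 2` goods belong to two bundles. -/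
theorem stmt5 {G : Type*} [Fintype G] [DecidableEq G] (n : ℕ) (hn : 2 ≤ n)
    (w : Fin n → G → ℝ)
    (hw : ∀ i g, 0 ≤ w i g) :
    ∃ A : Fin n → Finset G,
      (∀ i, mms (fun S => ∑ g ∈ S, w i g) n Finset.univ ≤ ∑ g ∈ A i, w i g) ∧
      (∀ g : G, (Finset.univ.filter fun i => g ∈ A i).card ≤ 2) ∧
      (Finset.univ.filter fun g : G =>
        (Finset.univ.filter fun i => g ∈ A i).card = 2).card ≤ n - 2 := by
  classical
  set μ : Fin n → ℝ := fun i => mms (fun S => ∑ g ∈ S, w i g) n Finset.univ with hμ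
  set R : Finset (Fin n) := Finset.univ.filter (fun i => 0 < μ i) with hR
  have hμR : ∀ j ∈ R, 0 < μ j := fun j hj => (Finset.mem_filter.mp hj).2
  have hstruct : ∀ j ∈ R, ∃ 𝒞 : Finset (Finset G), R.card ≤ 𝒞.card ∧
      (∀ b ∈ 𝒞, b ⊆ (Finset.univ : Finset G)) ∧
      (∀ b ∈ 𝒞, ∀ c ∈ 𝒞, b ≠ c → Disjoint b c) ∧
      (∀ b ∈ 𝒞, μ j ≤ ∑ g ∈ b, w j g) := by
    intro j hj
    obtain ⟨P, hP⟩ := mms_attained (w j) n (by omega)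
    have hdisj : ∀ k k' : Fin n, k ≠ k' →
        Disjoint (Finset.univ.filter (fun g : G => P g = k))
          (Finset.univ.filter (fun g : G => P g = k')) := by
      intro k k' hkk'
      refine Finset.disjoint_left.mpr ?_
      intro g hg hg'
      rw [Finset.mem_filter] at hg hg'
      exact hkk' (hg.2 ▸ hg'.2 ▸ rfl)
    have hinj : Set.InjOn (fun k : Fin n => Finset.univ.filter (fun g : G => P g = k))
        ↑(Finset.univ : Finset (Fin n)) := by
      intro k _ k' _ he
      by_contra hkk'
      simp only at he
      have hd := hdisj k k' hkk'
      rw [he] at hd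
      have hemp : Finset.univ.filter (fun g : G => P g = k') = ∅ :=
        (Finset.disjoint_self_iff_empty _).mp hd
      have := hP k'
      rw [hemp] at this
      simp at this
      exact absurd (lt_of_lt_of_le (hμR j hj) this) (lt_irrefl 0)
    refine ⟨(Finset.univ : Finset (Fin n)).image
      (fun k => Finset.univ.filter (fun g : G => P g = k)), ?_, ?_, ?_, ?_⟩
    · rw [Finset.card_image_of_injOn hinj]
      simp only [Finset.card_univ, Fintype.card_fin]
      exact (Finset.card_le_univ R).trans (by simp)
    · intro b _
      exact Finset.subset_univ b
    · intro b hb c hc hbc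
      rw [Finset.mem_image] at hb hc
      obtain ⟨k, _, rfl⟩ := hb
      obtain ⟨k', _, rfl⟩ := hc
      exact hdisj k k' (fun h => hbc (h ▸ rfl))
    · intro b hb
      rw [Finset.mem_image] at hb
      obtain ⟨k, _, rfl⟩ := hb
      exact hP k
  obtain ⟨A, h1, _, h3, h4, h5⟩ :=
    stage12 w hw μ R.card R Finset.univ le_rfl hμR hstruct
  have hfeq : ∀ g : G, Finset.univ.filter (fun i => g ∈ A i) =
      R.filter (fun i => g ∈ A i) := by
    intro g
    ext j
    simp only [Finset.mem_filter, Finset.mem_univ, true_and]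
    constructor
    · intro hg
      by_cases hjR : j ∈ R
      · exact ⟨hjR, hg⟩
      · rw [h3 j hjR] at hg
        exact absurd hg (Finset.notMem_empty g)
    · exact fun h => h.2
  refine ⟨A, ?_, ?_, ?_⟩
  · intro i
    by_cases hi : i ∈ R
    · exact h1 i hi
    · have hle : μ i ≤ 0 := by
        have : ¬ 0 < μ i := by
          intro h
          exact hi (Finset.mem_filter.mpr ⟨Finset.mem_univ i, h⟩)
        linarith [not_lt.mp this]
      rw [h3 i hi]
      simpa using hle
  · intro g
    rw [hfeq g]
    exact h4 g
  · have heq : (Finset.univ.filter fun g : G =>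
        (Finset.univ.filter fun i => g ∈ A i).card = 2) =
        (Finset.univ.filter fun g : G => (R.filter fun i => g ∈ A i).card = 2) := by
      apply Finset.filter_congr
      intro g _
      rw [hfeq g]
    rw [heq]
    refine h5.trans ?_
    have : R.card ≤ n := by
      refine (Finset.card_le_univ R).trans ?_
      simp
    omega
end

section
/- Let (N, M, {v_i}) be a fair division instance with n agents, m goods, and additive valuations, and let (N, {1,…,m}, {v'_i}) be its ordered counterpart, where v'_i(j) is the value under v_i of the j-th most valuable good of M according to agent i. For every partition A' = (A'_1,…,A'_n) of {1,…,m} among the n agents, there exists a partition A = (A_1,…,A_n) of M among the n agents such that v_i(A_i) ≥ Σ_{j ∈ A'_i} v'_i(j) for every agent i. -/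
/-!
Let agent `owner j` be the one receiving virtual good `j`. If, for every `j`, the owner of `j`
gets one of its own `j + 1` most valuable goods, with distinct `j` getting distinct goods, then
each agent's real bundle dominates its virtual one good by good. Such an assignment exists by
Hall's theorem: any `s` virtual goods with largest index `b` together admit at least the
`b + 1 ≥ s` candidate goods of `b` alone.
-/

open Finset

theorem exists_injective_forall_exists_le_eq_apply {ι α : Type*} [LinearOrder ι]
    [LocallyFiniteOrderBot ι] [DecidableEq α] (τ : ι → ι → α)
    (hτ : ∀ i, Function.Injective (τ i)) :
    ∃ f : ι → α, Function.Injective f ∧ ∀ i, ∃ k ≤ i, τ i k = f i := by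
  suffices hall : ∀ s : Finset ι, #s ≤ #(s.biUnion fun i => (Iic i).image (τ i)) by
    obtain ⟨f, hf, hmem⟩ := (all_card_le_biUnion_card_iff_exists_injective _).mp hall
    refine ⟨f, hf, fun i => ?_⟩
    simpa using hmem i
  intro s
  rcases s.eq_empty_or_nonempty with rfl | hs
  · simp
  calc #s ≤ #(Iic (s.max' hs)) := card_le_card fun i hi => mem_Iic.mpr (s.le_max' i hi)
    _ = #((Iic (s.max' hs)).image (τ (s.max' hs))) := (card_image_of_injective _ (hτ _)).symm
    _ ≤ _ := card_le_card (subset_biUnion_of_mem (fun i => (Iic i).image (τ i)) (s.max'_mem hs))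

theorem stmt9_general {G : Type*} [Fintype G] [DecidableEq G] (n : ℕ)
    (w : Fin n → G → ℝ)
    (σ : Fin n → (Fin (Fintype.card G) ≃ G))
    (hσ : ∀ i, ∀ j k : Fin (Fintype.card G), j ≤ k → w i (σ i k) ≤ w i (σ i j))
    (A' : Fin n → Finset (Fin (Fintype.card G)))
    (hd' : ∀ i j, i ≠ j → Disjoint (A' i) (A' j))
    (hu' : Finset.univ.biUnion A' = Finset.univ) :
    ∃ A : Fin n → Finset G,
      (∀ i j, i ≠ j → Disjoint (A i) (A j)) ∧
      (Finset.univ.biUnion A = Finset.univ) ∧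
      (∀ i, ∑ j ∈ A' i, w i (σ i j) ≤ ∑ g ∈ A i, w i g) := by
  have h_owner : ∀ j, ∃ i, j ∈ A' i := fun j => by
    simpa using (hu' ▸ mem_univ j : j ∈ univ.biUnion A')
  choose owner h_owner using h_owner
  have owner_eq {i j} (hj : j ∈ A' i) : owner j = i := by
    by_contra hne
    exact disjoint_left.mp (hd' _ _ hne) (h_owner j) hj
  obtain ⟨f, hf, hf_le⟩ :=
    exists_injective_forall_exists_le_eq_apply (fun j => σ (owner j)) fun j =>
      (σ (owner j)).injective
  have hf_surj : Function.Surjective f :=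
    ((Fintype.bijective_iff_injective_and_card f).mpr ⟨hf, Fintype.card_fin _⟩).2
  refine ⟨fun i => (A' i).image f, fun i j hij => (disjoint_image hf).mpr (hd' i j hij), ?_, ?_⟩
  · rw [← biUnion_image, hu', image_univ_of_surjective hf_surj]
  · intro i
    rw [sum_image hf.injOn]
    refine sum_le_sum fun j hj => ?_
    obtain ⟨k, hkj, hk⟩ := hf_le j
    rw [← hk, owner_eq hj]
    exact hσ i k j hkj

/-- Reduction to ordered instances, without copies. Given an additive instance
(weights `w i`) and, for each agent, an ordering `σ i` of the goods by non-increasing value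
(so the ordered counterpart has values `v'_i j = w i (σ i j)`), every partition `A'` of the
virtual goods can be converted into a partition `A` of the original goods with
`v_i(A_i) ≥ Σ_{j ∈ A'_i} v'_i(j)` for every agent `i`. -/
theorem stmt9 {G : Type*} [Fintype G] [DecidableEq G] (n : ℕ)
    (w : Fin n → G → ℝ) (hw : ∀ i g, 0 ≤ w i g)
    (σ : Fin n → (Fin (Fintype.card G) ≃ G))
    (hσ : ∀ i, ∀ j k : Fin (Fintype.card G), j ≤ k → w i (σ i k) ≤ w i (σ i j))
    (A' : Fin n → Finset (Fin (Fintype.card G)))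
    (hd' : ∀ i j, i ≠ j → Disjoint (A' i) (A' j))
    (hu' : Finset.univ.biUnion A' = Finset.univ) :
    ∃ A : Fin n → Finset G,
      (∀ i j, i ≠ j → Disjoint (A i) (A j)) ∧
      (Finset.univ.biUnion A = Finset.univ) ∧
      (∀ i, ∑ j ∈ A' i, w i (σ i j) ≤ ∑ g ∈ A i, w i g) :=
  stmt9_general n w σ hσ A' hd' hu'
end

section
/- Let (N, M, {v_i}) be a fair division instance with n agents, m goods, and additive valuations, and let (N, {1,…,m}, {v'_i}) be its ordered counterpart. Let A' = (A'_1,…,A'_n) be a simple allocation with copies of the virtual goods with t ≤ n/2 distinct copies: each A'_j ⊆ {1,…,m}, the virtual goods belonging to two bundles are exactly 1,…,t, no virtual good belongs to more than two bundles, and there exist 2t pairwise distinct agents i_1,…,i_t, i†_1,…,i†_t such that A'_{i_j} ∩ A'_{i†_j} = {j} for every j ∈ {1,…,t}. Then there exists an allocation with copies A = (A_1,…,A_n) of the original goods M such that each good of M belongs to at most two bundles, at most t goods belong to two bundles, and v_i(A_i) ≥ Σ_{j ∈ A'_i} v'_i(j) for every agent i. -/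
/-!
The allocation is built greedily, handling the virtual goods in increasing rank. When virtual
good `k` is handled, each of its holders `i` receives a real good among its own `k + 1` most
valuable ones, hence worth at least `v'_i(k)`. Such a choice keeping every good in at most two
bundles and at most `t` goods duplicated exists by counting: after rank `k` the bundles have at
most `k + min k t` goods in total, since each of the first `t` virtual goods has two holders and
every later one at most one. So either fewer than `t` goods are duplicated and the agent avoids
them, or an unallocated good is still among its top `k + 1`. An agent holds at most one of the
first `t` virtual goods, so both holders of such a good come to it with empty bundles.
-/

open Finset Function

theorem Antitone.exists_notMem_le_of_card_le {α β : Type*} [Preorder β] {m : ℕ}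
    {σ : Fin m ↪ α} {v : α → β} (hv : Antitone (v ∘ σ)) (j : Fin m) {F : Finset α}
    (hF : #F ≤ j) :
    ∃ g ∉ F, v (σ j) ≤ v g := by
  obtain ⟨g, hg, hgF⟩ := exists_mem_notMem_of_card_lt_card (s := F) (t := (Iic j).map σ)
    (by rw [card_map, Fin.card_Iic]; omega)
  obtain ⟨j', hj', rfl⟩ := mem_map.mp hg
  exact ⟨σ j', hgF, hv (mem_Iic.mp hj')⟩

namespace AllocWithCopies

section Copies

variable {ι G : Type*} [Fintype ι] [DecidableEq G]

def copies (A : ι → Finset G) (g : G) : ℕ := #{i | g ∈ A i}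

theorem notMem_of_copies_eq_zero {A : ι → Finset G} {g : G} (h : copies A g = 0) (i : ι) :
    g ∉ A i :=
  filter_eq_empty_iff.mp (card_eq_zero.mp h) (mem_univ i)

theorem eq_or_eq_of_copies_le_two [DecidableEq ι] {A : ι → Finset G} {g : G}
    (h : copies A g ≤ 2) {a b i : ι} (hab : a ≠ b) (ha : g ∈ A a) (hb : g ∈ A b)
    (hi : g ∈ A i) : i = a ∨ i = b := by
  by_contra! hne
  have hsub : ({i, a, b} : Finset ι) ⊆ ({i | g ∈ A i} : Finset ι) := by
    intro x hx
    simp only [mem_insert, mem_singleton] at hx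
    rcases hx with rfl | rfl | rfl <;> simpa
  have := card_le_card hsub
  rw [card_insert_of_notMem (by simp [hne.1, hne.2]), card_pair hab] at this
  exact absurd h (by unfold copies; omega)

variable [Fintype G]

theorem sum_card_eq_sum_copies (A : ι → Finset G) : ∑ i, #(A i) = ∑ g, copies A g := by
  simpa [bipartiteAbove, bipartiteBelow, copies] using
    sum_card_bipartiteAbove_eq_sum_card_bipartiteBelow (s := univ) (t := univ)
      (r := fun i g => g ∈ A i)

def allocated (A : ι → Finset G) : Finset G := {g | copies A g ≠ 0}

def duplicated (A : ι → Finset G) : Finset G := {g | copies A g = 2}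

theorem card_allocated_add_card_duplicated_le (A : ι → Finset G) :
    #(allocated A) + #(duplicated A) ≤ ∑ i, #(A i) := by
  rw [sum_card_eq_sum_copies, allocated, duplicated, card_filter, card_filter,
    ← sum_add_distrib]
  refine sum_le_sum fun g _ => ?_
  split_ifs <;> omega

theorem two_mul_card_duplicated_le (A : ι → Finset G) :
    2 * #(duplicated A) ≤ ∑ i, #(A i) := by
  have : duplicated A ⊆ allocated A := fun g => by simp +contextual [duplicated, allocated]
  have := card_le_card this
  have := card_allocated_add_card_duplicated_le A
  omega

end Copies

section Give

variable {ι G : Type*} [DecidableEq ι] [DecidableEq G]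

def give (A : ι → Finset G) (i : ι) (g : G) : ι → Finset G := update A i (insert g (A i))

variable {A : ι → Finset G} {i i' : ι} {g x : G}

theorem give_self : give A i g i = insert g (A i) := update_self ..

theorem give_of_ne (h : i' ≠ i) : give A i g i' = A i' := update_of_ne h ..

theorem mem_give : x ∈ give A i g i' ↔ x ∈ A i' ∨ i' = i ∧ x = g := by
  rcases eq_or_ne i' i with rfl | h
  · simp [give_self, or_comm]
  · simp [give_of_ne h, h]

variable [Fintype ι]

theorem copies_give_self (h : g ∉ A i) : copies (give A i g) g = copies A g + 1 := by
  have : ({i' | g ∈ give A i g i'} : Finset ι) = insert i ({i' | g ∈ A i'} : Finset ι) := by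
    ext i'
    simp [mem_give, or_comm]
  rw [copies, this, card_insert_of_notMem (by simpa)]
  rfl

theorem copies_give_of_ne (h : x ≠ g) : copies (give A i g) x = copies A x := by
  simp [copies, mem_give, h]

theorem copies_give_le_two (hA : ∀ x, copies A x ≤ 2) (hg : copies A g ≤ 1) (hgi : g ∉ A i)
    (x : G) : copies (give A i g) x ≤ 2 := by
  rcases eq_or_ne x g with rfl | h
  · rw [copies_give_self hgi]; omega
  · rw [copies_give_of_ne h]; exact hA x

variable [Fintype G]

theorem sum_card_give (h : g ∉ A i) : ∑ i', #(give A i g i') = ∑ i', #(A i') + 1 := by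
  rw [sum_card_eq_sum_copies, sum_card_eq_sum_copies, ← add_sum_erase _ _ (mem_univ g),
    ← add_sum_erase _ _ (mem_univ g), copies_give_self h, add_right_comm]
  congr 2
  exact sum_congr rfl fun x (hx : x ∈ univ.erase g) => copies_give_of_ne (ne_of_mem_erase hx)

theorem duplicated_give_subset : duplicated (give A i g) ⊆ insert g (duplicated A) := by
  intro x hx
  rcases eq_or_ne x g with rfl | h
  · exact mem_insert_self ..
  · exact mem_insert_of_mem (by simpa [duplicated, copies_give_of_ne h] using hx)

theorem duplicated_give_of_copies_eq_zero (h : copies A g = 0) :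
    duplicated (give A i g) = duplicated A := by
  ext x
  rcases eq_or_ne x g with rfl | hx
  · simp [duplicated, copies_give_self (notMem_of_copies_eq_zero h i), h]
  · simp [duplicated, copies_give_of_ne hx]

theorem exists_give_of_card_le {β : Type*} [Preorder β] {m s : ℕ} {A : ι → Finset G}
    (hA : ∀ x, copies A x ≤ 2) (hdup : #(duplicated A) ≤ s) {σ : Fin m ↪ G} {v : G → β}
    (hv : Antitone (v ∘ σ)) (i : ι) (j : Fin m) (hi : #(A i) + s ≤ j + 1)
    (hsum : ∑ i, #(A i) ≤ j + s) :
    ∃ g ∉ A i, v (σ j) ≤ v g ∧ (∀ x, copies (give A i g) x ≤ 2) ∧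
      #(duplicated (give A i g)) ≤ s := by
  by_cases hlt : #(duplicated A) < s
  · obtain ⟨g, hg, hvg⟩ := hv.exists_notMem_le_of_card_le j (F := A i ∪ duplicated A)
      ((card_union_le _ _).trans (by omega))
    rw [mem_union, not_or] at hg
    have hg1 : copies A g ≤ 1 := by
      have := hA g
      simp only [duplicated, mem_filter, mem_univ, true_and] at hg
      omega
    refine ⟨g, hg.1, hvg, copies_give_le_two hA hg1 hg.1, ?_⟩
    exact (card_le_card duplicated_give_subset).trans ((card_insert_le _ _).trans (by omega))
  · obtain ⟨g, hg, hvg⟩ := hv.exists_notMem_le_of_card_le j (F := allocated A)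
      (by have := card_allocated_add_card_duplicated_le A; omega)
    have h0 : copies A g = 0 := by simpa [allocated] using hg
    have hgi := notMem_of_copies_eq_zero h0 i
    refine ⟨g, hgi, hvg, copies_give_le_two hA (by omega) hgi, ?_⟩
    rwa [duplicated_give_of_copies_eq_zero h0]

end Give

end AllocWithCopies

section Prefix

variable {m : ℕ} {s : Finset (Fin m)} {k t : ℕ}

theorem filter_val_lt_succ_of_mem (hk : k < m) (h : ⟨k, hk⟩ ∈ s) :
    {j ∈ s | j.val < k + 1} = insert ⟨k, hk⟩ {j ∈ s | j.val < k} := by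
  ext ⟨j, hj⟩
  simp only [mem_filter, mem_insert, Fin.mk.injEq]
  constructor
  · rintro ⟨hjs, hjk⟩
    rcases Nat.lt_succ_iff_lt_or_eq.mp hjk with hlt | rfl
    · exact .inr ⟨hjs, hlt⟩
    · exact .inl rfl
  · rintro (rfl | ⟨hjs, hjk⟩)
    · exact ⟨h, Nat.lt_succ_self _⟩
    · exact ⟨hjs, by omega⟩

theorem filter_val_lt_succ_of_notMem (hk : k < m) (h : ⟨k, hk⟩ ∉ s) :
    {j ∈ s | j.val < k + 1} = {j ∈ s | j.val < k} := by
  refine filter_congr fun j hj => ⟨fun hjk => ?_, fun hjk => by omega⟩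
  rcases Nat.lt_succ_iff_lt_or_eq.mp hjk with hlt | hjk
  · exact hlt
  · exact absurd ((Fin.ext hjk : j = ⟨k, hk⟩) ▸ hj) h

theorem filter_val_lt_eq_empty (hs : #{j ∈ s | j.val < t} ≤ 1) (hk : k < m)
    (h : ⟨k, hk⟩ ∈ s) (hkt : k < t) : {j ∈ s | j.val < k} = ∅ := by
  refine filter_eq_empty_iff.mpr fun j hj hjk => ?_
  have := card_le_one.mp hs j (by simp [hj]; omega) ⟨k, hk⟩ (by simp [h, hkt])
  exact absurd hjk (by simp [this])

theorem card_filter_val_lt_le (hs : #{j ∈ s | j.val < t} ≤ 1) (htk : t ≤ k) :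
    #{j ∈ s | j.val < k} ≤ 1 + (k - t) := by
  have hsub' : univ.filter (fun j : Fin m => j.val < t) ⊆ univ.filter (·.val < k) := by
    intro j
    simp only [mem_filter, mem_univ, true_and]
    omega
  have hsub : {j ∈ s | j.val < k} ⊆ {j ∈ s | j.val < t} ∪
      (univ.filter (fun j : Fin m => j.val < k) \ univ.filter (·.val < t)) := by
    intro j hj
    rw [mem_filter] at hj
    by_cases hjt : j.val < t
    · exact mem_union_left _ (mem_filter.mpr ⟨hj.1, hjt⟩)
    · exact mem_union_right _ (by simp [hj.2, hjt])
  refine (card_le_card hsub).trans ((card_union_le _ _).trans ?_)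
  rw [card_sdiff_of_subset hsub', Fin.card_filter_val_lt, Fin.card_filter_val_lt]
  omega

end Prefix

namespace AllocWithCopies

section Greedy

variable {ι G : Type*} {m : ℕ} (w : ι → G → ℝ) (σ : ι → Fin m ↪ G)
  (A' : ι → Finset (Fin m))

structure CoversPrefix (k : ℕ) (i : ι) (B : Finset G) : Prop where
  card_eq : #B = #{j ∈ A' i | j.val < k}
  sum_le : ∑ j ∈ A' i with j.val < k, w i (σ i j) ≤ ∑ g ∈ B, w i g

variable {w σ A'} {k : ℕ} {i : ι} {B : Finset G} {g : G}

theorem CoversPrefix.insert [DecidableEq G] (hB : CoversPrefix w σ A' k i B) (hk : k < m)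
    (hi : ⟨k, hk⟩ ∈ A' i) (hg : g ∉ B) (hv : w i (σ i ⟨k, hk⟩) ≤ w i g) :
    CoversPrefix w σ A' (k + 1) i (insert g B) where
  card_eq := by
    rw [card_insert_of_notMem hg, hB.card_eq, filter_val_lt_succ_of_mem hk hi,
      card_insert_of_notMem (by simp)]
  sum_le := by
    rw [filter_val_lt_succ_of_mem hk hi, sum_insert (by simp), sum_insert hg]
    exact add_le_add hv hB.sum_le

theorem CoversPrefix.succ_of_notMem (hB : CoversPrefix w σ A' k i B) (hk : k < m)
    (hi : ⟨k, hk⟩ ∉ A' i) : CoversPrefix w σ A' (k + 1) i B := by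
  have h := filter_val_lt_succ_of_notMem hk hi
  exact ⟨h ▸ hB.card_eq, h ▸ hB.sum_le⟩

variable (w σ A') [Fintype ι] [Fintype G] [DecidableEq G]

structure IsPrefixAllocation (t k : ℕ) (A : ι → Finset G) : Prop where
  covers : ∀ i, CoversPrefix w σ A' k i (A i)
  sum_card_le : ∑ i, #(A i) ≤ k + min k t
  copies_le : ∀ g, copies A g ≤ 2
  card_duplicated_le : #(duplicated A) ≤ t

variable {w σ A'} [DecidableEq ι] {t : ℕ} {A : ι → Finset G}

theorem IsPrefixAllocation.exists_succ_of_lt (hA : IsPrefixAllocation w σ A' t k A)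
    (hσ : ∀ i, Antitone (w i ∘ σ i)) (hone : ∀ i, #{j ∈ A' i | j.val < t} ≤ 1)
    (hdup : ∀ j : Fin m, j.val < t → copies A' j = 2) (hk : k < m) (hkt : k < t) :
    ∃ A₂, IsPrefixAllocation w σ A' t (k + 1) A₂ := by
  set j : Fin m := ⟨k, hk⟩
  obtain ⟨a, b, hab, hholders⟩ := card_eq_two.mp (hdup j hkt)
  have hholder : ∀ i, j ∈ A' i ↔ i = a ∨ i = b := fun i => by
    simpa using congrArg (i ∈ ·) hholders
  have hempty : ∀ i, j ∈ A' i → A i = ∅ := fun i hi => card_eq_zero.mp <| by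
    rw [(hA.covers i).card_eq, filter_val_lt_eq_empty (hone i) hk hi hkt, card_empty]
  have hsum := hA.sum_card_le
  have hdupA : #(duplicated A) ≤ k + 1 := by
    have := two_mul_card_duplicated_le A
    omega
  have hAa := hempty a ((hholder a).2 (.inl rfl))
  have hAb := hempty b ((hholder b).2 (.inr rfl))
  obtain ⟨ga, hga, hva, hcopies₁, hdup₁⟩ :=
    exists_give_of_card_le hA.copies_le hdupA (hσ a) a j
    (by simp [hAa, j]) (by simp [j]; omega)
  have hA₁b : give A a ga b = A b := give_of_ne hab.symm
  have hsum₁ : ∑ i, #(give A a ga i) = ∑ i, #(A i) + 1 := sum_card_give hga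
  obtain ⟨gb, hgb, hvb, hcopies₂, hdup₂⟩ :=
    exists_give_of_card_le hcopies₁ hdup₁ (hσ b) b j
    (by simp [hA₁b, hAb, j]) (by simp [j]; omega)
  refine ⟨give (give A a ga) b gb, fun i => ?_, ?_, hcopies₂, by omega⟩
  · rcases eq_or_ne i b with rfl | hib
    · rw [give_self, hA₁b]
      exact (hA.covers i).insert hk ((hholder i).2 (.inr rfl)) (hA₁b ▸ hgb) hvb
    rw [give_of_ne hib]
    rcases eq_or_ne i a with rfl | hia
    · rw [give_self]
      exact (hA.covers i).insert hk ((hholder i).2 (.inl rfl)) hga hva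
    · rw [give_of_ne hia]
      exact (hA.covers i).succ_of_notMem hk (by rw [hholder]; tauto)
  · rw [sum_card_give hgb, hsum₁]
    omega

theorem IsPrefixAllocation.exists_succ_of_le (hA : IsPrefixAllocation w σ A' t k A)
    (hσ : ∀ i, Antitone (w i ∘ σ i)) (hone : ∀ i, #{j ∈ A' i | j.val < t} ≤ 1)
    (hsingle : ∀ j : Fin m, t ≤ j.val → copies A' j ≤ 1) (hk : k < m) (htk : t ≤ k) :
    ∃ A₂, IsPrefixAllocation w σ A' t (k + 1) A₂ := by
  set j : Fin m := ⟨k, hk⟩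
  have hsum := hA.sum_card_le
  by_cases hheld : ∃ i₀, j ∈ A' i₀
  · obtain ⟨i₀, hi₀⟩ := hheld
    have hunique : ∀ i, j ∈ A' i → i = i₀ := fun i hi =>
      card_le_one.mp (hsingle j htk) i (by simpa) i₀ (by simpa)
    have hcard : #(A i₀) ≤ 1 + (k - t) :=
      (hA.covers i₀).card_eq ▸ card_filter_val_lt_le (hone i₀) htk
    obtain ⟨g, hg, hv, hcopies, hdup⟩ := exists_give_of_card_le hA.copies_le
      hA.card_duplicated_le (hσ i₀) i₀ j (by simp [j]; omega) (by simp [j]; omega)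
    refine ⟨give A i₀ g, fun i => ?_, by rw [sum_card_give hg]; omega, hcopies, hdup⟩
    rcases eq_or_ne i i₀ with rfl | hne
    · rw [give_self]
      exact (hA.covers i).insert hk hi₀ hg hv
    · rw [give_of_ne hne]
      exact (hA.covers i).succ_of_notMem hk (mt (hunique i) hne)
  · exact ⟨A, fun i => (hA.covers i).succ_of_notMem hk (not_exists.mp hheld i), by omega,
      hA.copies_le, hA.card_duplicated_le⟩

theorem exists_isPrefixAllocation (hσ : ∀ i, Antitone (w i ∘ σ i))
    (hone : ∀ i, #{j ∈ A' i | j.val < t} ≤ 1)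
    (hdup : ∀ j : Fin m, j.val < t → copies A' j = 2)
    (hsingle : ∀ j : Fin m, t ≤ j.val → copies A' j ≤ 1) :
    ∀ k ≤ m, ∃ A, IsPrefixAllocation w σ A' t k A
  | 0, _ => ⟨fun _ => ∅, fun i => ⟨by simp, by simp⟩, by simp, fun g => by simp [copies],
      by simp [duplicated, copies]⟩
  | k + 1, hk => by
    obtain ⟨A, hA⟩ := exists_isPrefixAllocation hσ hone hdup hsingle k (by omega)
    rcases lt_or_ge k t with hkt | htk
    · exact hA.exists_succ_of_lt hσ hone hdup hk hkt
    · exact hA.exists_succ_of_le hσ hone hsingle hk htk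

end Greedy

theorem card_filter_val_lt_le_one_of_pairs {ι : Type*} [Fintype ι] [DecidableEq ι] {m t : ℕ}
    {A' : ι → Finset (Fin m)} (hcopies : ∀ j, copies A' j ≤ 2) (htm : t ≤ m)
    {f : Fin t ⊕ Fin t → ι} (hf : Injective f)
    (hpair : ∀ p : Fin t, A' (f (.inl p)) ∩ A' (f (.inr p)) = {Fin.castLE htm p}) (i : ι) :
    #{j ∈ A' i | j.val < t} ≤ 1 := by
  have holder : ∀ p : Fin t, Fin.castLE htm p ∈ A' i → i = f (.inl p) ∨ i = f (.inr p) := by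
    intro p hp
    have hmem := mem_inter.mp ((hpair p).symm ▸ mem_singleton_self (Fin.castLE htm p))
    exact eq_or_eq_of_copies_le_two (hcopies _) (hf.ne Sum.inl_ne_inr) hmem.1 hmem.2 hp
  refine card_le_one.mpr fun x hx y hy => ?_
  rw [mem_filter] at hx hy
  rcases holder ⟨x, hx.2⟩ hx.1 with hx' | hx' <;>
    rcases holder ⟨y, hy.2⟩ hy.1 with hy' | hy' <;>
    simpa [Fin.ext_iff] using hf (hx'.symm.trans hy')

end AllocWithCopies

theorem stmt10_general {G : Type*} [Fintype G] [DecidableEq G] (n : ℕ)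
    (w : Fin n → G → ℝ)
    (σ : Fin n → (Fin (Fintype.card G) ≃ G))
    (hσ : ∀ i, ∀ j k : Fin (Fintype.card G), j ≤ k → w i (σ i k) ≤ w i (σ i j))
    (t : ℕ) (htm : t ≤ Fintype.card G)
    (A' : Fin n → Finset (Fin (Fintype.card G)))
    (hcopies : ∀ j : Fin (Fintype.card G),
      (Finset.univ.filter fun i => j ∈ A' i).card ≤ 2)
    (hdup : ∀ j : Fin (Fintype.card G),
      (Finset.univ.filter fun i => j ∈ A' i).card = 2 ↔ (j : ℕ) < t)
    (hpair : ∃ f : Fin t ⊕ Fin t → Fin n, Function.Injective f ∧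
      ∀ j : Fin t, A' (f (Sum.inl j)) ∩ A' (f (Sum.inr j)) = {Fin.castLE htm j}) :
    ∃ A : Fin n → Finset G,
      (∀ g : G, (Finset.univ.filter fun i => g ∈ A i).card ≤ 2) ∧
      ((Finset.univ.filter fun g : G =>
        (Finset.univ.filter fun i => g ∈ A i).card = 2).card ≤ t) ∧
      (∀ i, ∑ j ∈ A' i, w i (σ i j) ≤ ∑ g ∈ A i, w i g) := by
  obtain ⟨f, hf, hpair⟩ := hpair
  have hsingle (j : Fin (Fintype.card G)) (hj : t ≤ j.val) :
      AllocWithCopies.copies A' j ≤ 1 := by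
    have := (hdup j).not.mpr (by omega)
    have := hcopies j
    unfold AllocWithCopies.copies
    omega
  obtain ⟨A, hA⟩ := AllocWithCopies.exists_isPrefixAllocation (w := w)
    (σ := fun i => (σ i).toEmbedding) (fun i _ _ h => hσ i _ _ h)
    (AllocWithCopies.card_filter_val_lt_le_one_of_pairs hcopies htm hf hpair)
    (fun j => (hdup j).mpr) hsingle _ le_rfl
  refine ⟨A, hA.copies_le, hA.card_duplicated_le, fun i => ?_⟩
  simpa using (hA.covers i).sum_le

/-- Reduction to ordered instances for simple allocations. Given an additive
instance (weights `w i`) with orderings `σ i` of the goods by non-increasing value, and a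
simple allocation with copies `A'` of the virtual goods with `t ≤ n/2` distinct copies
(the duplicated virtual goods being exactly the top `t` goods, no virtual good in more than
two bundles, and the two instances of the `j`-th duplicated good held by `2t` pairwise
distinct agents), there is an allocation with copies `A` of the original goods in which each
good belongs to at most two bundles, at most `t` goods belong to two bundles, and
`v_i(A_i) ≥ Σ_{j ∈ A'_i} v'_i(j)` for every agent `i`. -/
theorem stmt10 {G : Type*} [Fintype G] [DecidableEq G] (n : ℕ)
    (w : Fin n → G → ℝ) (hw : ∀ i g, 0 ≤ w i g)
    (σ : Fin n → (Fin (Fintype.card G) ≃ G))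
    (hσ : ∀ i, ∀ j k : Fin (Fintype.card G), j ≤ k → w i (σ i k) ≤ w i (σ i j))
    (t : ℕ) (ht : 2 * t ≤ n) (htm : t ≤ Fintype.card G)
    (A' : Fin n → Finset (Fin (Fintype.card G)))
    (hcopies : ∀ j : Fin (Fintype.card G),
      (Finset.univ.filter fun i => j ∈ A' i).card ≤ 2)
    (hdup : ∀ j : Fin (Fintype.card G),
      (Finset.univ.filter fun i => j ∈ A' i).card = 2 ↔ (j : ℕ) < t)
    (hpair : ∃ f : Fin t ⊕ Fin t → Fin n, Function.Injective f ∧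
      ∀ j : Fin t, A' (f (Sum.inl j)) ∩ A' (f (Sum.inr j)) = {Fin.castLE htm j}) :
    ∃ A : Fin n → Finset G,
      (∀ g : G, (Finset.univ.filter fun i => g ∈ A i).card ≤ 2) ∧
      ((Finset.univ.filter fun g : G =>
        (Finset.univ.filter fun i => g ∈ A i).card = 2).card ≤ t) ∧
      (∀ i, ∑ j ∈ A' i, w i (σ i j) ≤ ∑ g ∈ A i, w i g) :=
  stmt10_general n w σ hσ t htm A' hcopies hdup hpair
end

section
/- Let M be a finite set of goods, let v : 2^M → ℝ≥0 be an additive valuation, and let τ ≥ 0. Let X = {x_1,…,x_k} and Y = {y_1,…,y_k} be subsets of M of the same size k, enumerated so that v({y_j}) ≥ v({x_j}) for every j ∈ {1,…,k}. If there exists a set G ⊆ M \ X of ℓ distinct goods such that v(X ∪ {g}) ≥ τ for every g ∈ G, then there exists a set H ⊆ M \ Y of ℓ distinct goods such that v(Y ∪ {h}) ≥ τ for every h ∈ H. -/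
open Finset

private lemma stmt11_aux {M : Type*} [Fintype M] [DecidableEq M]
    (w : M → ℝ) {k : ℕ} (x y : Fin k → M)
    (hx : Function.Injective x) (hy : Function.Injective y)
    (hxy : ∀ j, w (x j) ≤ w (y j))
    (ℓ : ℕ) (Gs : Finset M) (hGcard : Gs.card = ℓ)
    (hGX : ∀ g ∈ Gs, g ∉ Finset.univ.image x) :
    ∀ (J : Finset (Fin k)) (τ : ℝ),
      (∀ g ∈ Gs, τ ≤ w g + ∑ i ∈ J, w (x i)) →
      ∃ H : Finset M, H.card = ℓ ∧ H ⊆ Gs ∪ J.image x ∧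
        (∀ h ∈ H, h ∉ J.image y) ∧
        (∀ h ∈ H, τ ≤ w h + ∑ i ∈ J, w (y i)) := by
  intro J
  induction J using Finset.strongInductionOn with
  | _ J ih =>
    intro τ hGτ
    by_cases hcase : ∃ j ∈ J, x j ∉ J.image y
    · obtain ⟨j, hjJ, hxjY⟩ := hcase
      have hsumx : ∑ i ∈ J, w (x i) = w (x j) + ∑ i ∈ J.erase j, w (x i) :=
        (Finset.add_sum_erase J _ hjJ).symm
      have hsumy : ∑ i ∈ J, w (y i) = w (y j) + ∑ i ∈ J.erase j, w (y i) :=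
        (Finset.add_sum_erase J _ hjJ).symm
      obtain ⟨H', hcard', hsub', havoid', hτ'⟩ :=
        ih (J.erase j) (Finset.erase_ssubset hjJ) (τ - w (x j))
          (fun g hg => by
            have := hGτ g hg
            rw [hsumx] at this; linarith)
      have hJimy : J.image y = insert (y j) ((J.erase j).image y) := by
        conv_lhs => rw [← Finset.insert_erase hjJ]
        rw [Finset.image_insert]
      have hkey : ∀ h ∈ H', τ ≤ w h + ∑ i ∈ J, w (y i) := by
        intro h hh
        have := hτ' h hh
        have hxyj := hxy j
        rw [hsumy]; linarith
      by_cases hyj : y j ∈ H'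
      · -- replace y j by x j
        have hxjH' : x j ∉ H' := by
          intro hmem
          rcases Finset.mem_union.mp (hsub' hmem) with h1 | h1
          · exact hGX _ h1 (Finset.mem_image.mpr ⟨j, Finset.mem_univ j, rfl⟩)
          · obtain ⟨i, hi, hix⟩ := Finset.mem_image.mp h1
            exact (Finset.ne_of_mem_erase hi) (hx hix)
        refine ⟨insert (x j) (H'.erase (y j)), ?_, ?_, ?_, ?_⟩
        · rw [Finset.card_insert_of_notMem (fun hmem => hxjH' (Finset.mem_of_mem_erase hmem)),
            Finset.card_erase_of_mem hyj, hcard']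
          have : 1 ≤ ℓ := hcard' ▸ Finset.card_pos.mpr ⟨y j, hyj⟩
          omega
        · intro h hh
          rcases Finset.mem_insert.mp hh with rfl | hh
          · exact Finset.mem_union_right _
              (Finset.mem_image.mpr ⟨j, hjJ, rfl⟩)
          · have := hsub' (Finset.mem_of_mem_erase hh)
            rcases Finset.mem_union.mp this with h1 | h1
            · exact Finset.mem_union_left _ h1
            · exact Finset.mem_union_right _
                (Finset.image_subset_image (Finset.erase_subset _ _) h1)
        · intro h hh
          rcases Finset.mem_insert.mp hh with rfl | hh
          · exact hxjY
          · rw [hJimy]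
            intro hmem
            rcases Finset.mem_insert.mp hmem with h1 | h1
            · exact (Finset.ne_of_mem_erase hh) h1
            · exact havoid' h (Finset.mem_of_mem_erase hh) h1
        · intro h hh
          rcases Finset.mem_insert.mp hh with rfl | hh
          · have := hτ' (y j) hyj
            rw [hsumy]; linarith
          · exact hkey h (Finset.mem_of_mem_erase hh)
      · refine ⟨H', hcard', ?_, ?_, hkey⟩
        · intro h hh
          rcases Finset.mem_union.mp (hsub' hh) with h1 | h1
          · exact Finset.mem_union_left _ h1
          · exact Finset.mem_union_right _
              (Finset.image_subset_image (Finset.erase_subset _ _) h1)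
        · intro h hh
          rw [hJimy]
          intro hmem
          rcases Finset.mem_insert.mp hmem with h1 | h1
          · exact hyj (h1 ▸ hh)
          · exact havoid' h hh h1
    · -- J.image x = J.image y, take H = Gs
      push_neg at hcase
      have himeq : J.image x = J.image y := by
        apply Finset.eq_of_subset_of_card_le
        · intro m hm
          obtain ⟨i, hi, him⟩ := Finset.mem_image.mp hm
          exact him ▸ hcase i hi
        · rw [Finset.card_image_of_injective _ hy,
            Finset.card_image_of_injective _ hx]
      have hsumeq : ∑ i ∈ J, w (x i) = ∑ i ∈ J, w (y i) := by
        rw [← Finset.sum_image (fun a _ b _ h => hx h),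
            ← Finset.sum_image (fun a _ b _ h => hy h), himeq]
      refine ⟨Gs, hGcard, Finset.subset_union_left, ?_, ?_⟩
      · intro h hh hmem
        rw [← himeq] at hmem
        exact hGX h hh (Finset.image_subset_image (Finset.subset_univ J) hmem)
      · intro h hh
        have := hGτ h hh
        linarith [hsumeq]

/-- Let `w` be (the weights of) an additive valuation on the goods `M`, and let
`X = {x 1, …, x k}`, `Y = {y 1, …, y k}` be equal-size subsets with `w (y j) ≥ w (x j)` for
every `j`. If there are `ℓ` distinct goods `g ∉ X` with `v(X ∪ {g}) ≥ τ`, then there are `ℓ`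
distinct goods `h ∉ Y` with `v(Y ∪ {h}) ≥ τ`. -/
theorem stmt11 {M : Type*} [Fintype M] [DecidableEq M]
    (w : M → ℝ) (hw : ∀ g, 0 ≤ w g) (τ : ℝ) (hτ : 0 ≤ τ)
    (k : ℕ) (x y : Fin k → M)
    (hx : Function.Injective x) (hy : Function.Injective y)
    (hxy : ∀ j, w (x j) ≤ w (y j))
    (ℓ : ℕ) (Gs : Finset M) (hGcard : Gs.card = ℓ)
    (hGX : ∀ g ∈ Gs, g ∉ Finset.univ.image x)
    (hGτ : ∀ g ∈ Gs, τ ≤ ∑ a ∈ insert g (Finset.univ.image x), w a) :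
    ∃ H : Finset M, H.card = ℓ ∧
      (∀ h ∈ H, h ∉ Finset.univ.image y) ∧
      (∀ h ∈ H, τ ≤ ∑ a ∈ insert h (Finset.univ.image y), w a) := by
  have hsx : ∑ a ∈ Finset.univ.image x, w a = ∑ i ∈ Finset.univ, w (x i) :=
    Finset.sum_image (fun a _ b _ h => hx h)
  have hsy : ∑ a ∈ Finset.univ.image y, w a = ∑ i ∈ Finset.univ, w (y i) :=
    Finset.sum_image (fun a _ b _ h => hy h)
  obtain ⟨H, hc, hsub, havoid, hwt⟩ :=
    stmt11_aux w x y hx hy hxy ℓ Gs hGcard hGX Finset.univ τ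
      (fun g hg => by
        have := hGτ g hg
        rw [Finset.sum_insert (hGX g hg), hsx] at this
        exact this)
  refine ⟨H, hc, havoid, fun h hh => ?_⟩
  rw [Finset.sum_insert (havoid h hh), hsy]
  exact hwt h hh
end

section
/- Let M = {1,…,m} be a set of goods, let v : 2^M → ℝ≥0 be an additive valuation with v({1}) ≥ v({2}) ≥ … ≥ v({m}), let n ≥ 2 be an integer number of agents, and let k be a nonnegative integer with k < m/n. Let K = {k(n−1)+1, k(n−1)+2, …, nk, nk+1}. Then μ^{n−1}(M \ K) ≥ μ^n(M), where μ^d(S) denotes the maximum over all partitions of S into d bundles of the minimum value of a bundle under v. -/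
/-!
Fix a partition of the goods into `n` bundles. By pigeonhole, the `nk + 1` most valuable goods
(indices `≤ nk`) meet some bundle `B` in at least `k + 1 = |K|` goods, so the goods of `K` outside
`B` are at most as many as the goods of `B` preceding `K`. Matching the former injectively with the
latter, and fixing every other good, maps `M \ B` injectively into `M \ K` without decreasing any
value. The other `n - 1` bundles partition `M \ B`; their images, with the leftover goods added to
any of them, partition `M \ K` into `n - 1` bundles, none of smaller value.
-/

open Finset

section MaximinShare

variable {G : Type*} {d : ℕ}

lemma le_mms [Finite G] [NeZero d] {v : Finset G → ℝ} {S : Finset G} {c : ℝ} (Q : G → Fin d)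
    (hQ : ∀ i, c ≤ v (S.filter fun g => Q g = i)) : c ≤ mms v d S := by
  unfold mms
  exact le_ciSup_of_le (Set.finite_range _).bddAbove Q (le_ciInf hQ)

lemma iInf_le_mms_filter_ne [Finite G] [NeZero d] (v : Finset G → ℝ) (S : Finset G)
    (P : G → Fin (d + 1)) (b : Fin (d + 1)) :
    ⨅ j, v (S.filter fun g => P g = j) ≤ mms v d (S.filter fun g => P g ≠ b) := by
  refine le_mms (fun g => (finSuccEquiv' b (P g)).getD 0) fun i => ?_
  have hfiber : ((S.filter fun g => P g ≠ b).filter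
      fun g => (finSuccEquiv' b (P g)).getD 0 = i) = S.filter fun g => P g = b.succAbove i := by
    ext g
    simp only [mem_filter, and_assoc]
    refine and_congr_right fun _ => ⟨fun ⟨hne, hi⟩ => ?_, fun h => ⟨h ▸ b.succAbove_ne i, ?_⟩⟩
    · obtain ⟨j, hj⟩ := Fin.exists_succAbove_eq hne
      rw [← hj, finSuccEquiv'_succAbove, Option.getD_some] at hi
      rw [← hj, hi]
    · rw [h, finSuccEquiv'_succAbove, Option.getD_some]
  rw [hfiber]
  exact ciInf_le (Set.finite_range _).bddBelow _

lemma mms_le_mms_of_injOn {H : Type*} [Finite H] [NeZero d] {u : G → ℝ} {w : H → ℝ}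
    (hw : ∀ h, 0 ≤ w h) {S : Finset G} {T : Finset H} (ψ : G → H) (hmaps : Set.MapsTo ψ S T)
    (hinj : Set.InjOn ψ S) (hle : ∀ g ∈ S, u g ≤ w (ψ g)) :
    mms (fun s => ∑ g ∈ s, u g) d S ≤ mms (fun t => ∑ h ∈ t, w h) d T := by
  classical
  refine ciSup_le fun P => ?_
  let Q : H → Fin d := fun h => if hh : ∃ g ∈ S, ψ g = h then P hh.choose else 0
  have hQ : ∀ g ∈ S, Q (ψ g) = P g := by
    intro g hg
    have hh : ∃ g' ∈ S, ψ g' = ψ g := ⟨g, hg, rfl⟩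
    simp only [Q, dif_pos hh]
    rw [hinj hh.choose_spec.1 hg hh.choose_spec.2]
  refine le_mms Q fun i => ?_
  calc ⨅ j, ∑ g ∈ S.filter (P · = j), u g
      ≤ ∑ g ∈ S.filter (P · = i), u g := ciInf_le (Set.finite_range _).bddBelow i
    _ ≤ ∑ g ∈ S.filter (P · = i), w (ψ g) := sum_le_sum fun g hg => hle g (mem_filter.1 hg).1
    _ = ∑ h ∈ (S.filter (P · = i)).image ψ, w h :=
      (sum_image fun x hx y hy => hinj (mem_filter.1 hx).1 (mem_filter.1 hy).1).symm
    _ ≤ ∑ h ∈ T.filter (Q · = i), w h := by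
      refine sum_le_sum_of_subset_of_nonneg (image_subset_iff.2 fun g hg => ?_) fun h _ _ => hw h
      rw [mem_filter] at hg ⊢
      exact ⟨hmaps hg.1, (hQ g hg.1).trans hg.2⟩

lemma mms_sdiff_le_mms_sdiff [Fintype G] [DecidableEq G] [NeZero d] {w : G → ℝ}
    (hw : ∀ g, 0 ≤ w g) {A B : Finset G} (ψ : G → G) (hmaps : Set.MapsTo ψ ↑(B \ A) ↑(A \ B))
    (hinj : Set.InjOn ψ ↑(B \ A)) (hle : ∀ g ∈ B \ A, w g ≤ w (ψ g)) :
    mms (fun S => ∑ g ∈ S, w g) d (univ \ A) ≤ mms (fun S => ∑ g ∈ S, w g) d (univ \ B) := by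
  have hψ : ∀ g ∈ B, g ∉ A → ψ g ∈ A \ B := fun g hgB hgA => hmaps (mem_sdiff.2 ⟨hgB, hgA⟩)
  refine mms_le_mms_of_injOn hw (B.piecewise ψ id) (fun g hg => ?_) (fun x hx y hy hxy => ?_)
    (fun g hg => ?_)
  · rw [mem_coe, mem_sdiff] at hg ⊢
    by_cases hgB : g ∈ B
    · rw [piecewise_eq_of_mem _ _ _ hgB]
      exact ⟨mem_univ _, (mem_sdiff.1 (hψ g hgB hg.2)).2⟩
    · rw [piecewise_eq_of_notMem _ _ _ hgB]
      exact ⟨mem_univ _, hgB⟩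
  · rw [mem_coe, mem_sdiff] at hx hy
    by_cases hxB : x ∈ B <;> by_cases hyB : y ∈ B <;>
      simp only [piecewise_eq_of_mem, piecewise_eq_of_notMem, hxB, hyB, not_false_eq_true,
        id] at hxy
    · exact hinj (mem_sdiff.2 ⟨hxB, hx.2⟩) (mem_sdiff.2 ⟨hyB, hy.2⟩) hxy
    · exact absurd (hxy ▸ (mem_sdiff.1 (hψ x hxB hx.2)).1) hy.2
    · exact absurd (hxy ▸ (mem_sdiff.1 (hψ y hyB hy.2)).1) hx.2
    · exact hxy
  · by_cases hgB : g ∈ B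
    · rw [piecewise_eq_of_mem _ _ _ hgB]
      exact hle g (mem_sdiff.2 ⟨hgB, (mem_sdiff.1 hg).2⟩)
    · rw [piecewise_eq_of_notMem _ _ _ hgB, id]

lemma mms_sdiff_le_mms_sdiff_of_card_le [LinearOrder G] [Fintype G] [NeZero d]
    {w : G → ℝ} (hw : ∀ g, 0 ≤ w g) (hanti : Antitone w) {A I K : Finset G} (hKI : K ⊆ I)
    (hprec : ∀ x ∈ I \ K, ∀ y ∈ K, x ≤ y) (hcard : #K ≤ #(I ∩ A)) :
    mms (fun S => ∑ g ∈ S, w g) d (univ \ A) ≤ mms (fun S => ∑ g ∈ S, w g) d (univ \ K) := by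
  have hsize : #(K \ A) ≤ #((I ∩ A) \ K) := by
    have h₁ := card_sdiff_add_card_inter K A
    have h₂ := card_sdiff_add_card_inter (I ∩ A) K
    rw [inter_right_comm, inter_eq_right.2 hKI] at h₂
    omega
  obtain ⟨ψ, hmaps, hinj⟩ : ∃ ψ : G → G,
      Set.MapsTo ψ ↑(K \ A) ↑((I ∩ A) \ K) ∧ Set.InjOn ψ ↑(K \ A) := by
    rcases (K \ A).eq_empty_or_nonempty with hX | ⟨x, -⟩
    · rw [hX, coe_empty]
      exact ⟨id, Set.mapsTo_empty _ _, Set.injOn_empty _⟩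
    · have : Nonempty G := ⟨x⟩
      have hle : (↑(K \ A) : Set G).encard ≤ (↑((I ∩ A) \ K) : Set G).encard := by
        simpa only [Set.encard_coe_eq_coe_finsetCard, Nat.cast_le]
      exact (K \ A).finite_toSet.exists_injOn_of_encard_le hle
  refine mms_sdiff_le_mms_sdiff hw ψ (hmaps.mono_right ?_) hinj fun g hg => hanti ?_
  · exact sdiff_subset_sdiff inter_subset_right subset_rfl
  · exact hprec _ (sdiff_subset_sdiff inter_subset_left subset_rfl (hmaps hg)) g
      (mem_sdiff.1 hg).1

end MaximinShare

/-- For an ordered additive instance on goods `{1,…,m}` (indexed here by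
`Fin m`, with weights non-increasing in the index), `n ≥ 2`, and `k < m/n`, removing the
goods `K = {k(n−1)+1, …, nk+1}` (0-indexed: those with index in `[k(n−1), nk]`) and one
agent does not decrease the maximin share:
`μ^{n−1}(M \ K) ≥ μ^n(M)`. -/
theorem stmt12 (m : ℕ) (w : Fin m → ℝ) (hw : ∀ g, 0 ≤ w g)
    (hord : ∀ a b : Fin m, a ≤ b → w b ≤ w a)
    (n : ℕ) (hn : 2 ≤ n) (k : ℕ) (hk : k * n < m) :
    mms (fun S => ∑ g ∈ S, w g) n Finset.univ ≤
      mms (fun S => ∑ g ∈ S, w g) (n - 1)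
        (Finset.univ \ (Finset.univ.filter fun g : Fin m =>
          k * (n - 1) ≤ (g : ℕ) ∧ (g : ℕ) ≤ n * k)) := by
  obtain ⟨d, rfl⟩ : ∃ d, n = d + 2 := ⟨n - 2, by omega⟩
  let a : Fin m := ⟨k * (d + 1), by nlinarith⟩
  let t : Fin m := ⟨(d + 2) * k, by linarith⟩
  have hK : (univ.filter fun g : Fin m => k * (d + 2 - 1) ≤ (g : ℕ) ∧ (g : ℕ) ≤ (d + 2) * k)
      = Icc a t := by
    ext g
    simp [Fin.le_def, a, t]
  have hcardK : #(Icc a t) = k + 1 := by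
    rw [Fin.card_Icc]
    change (d + 2) * k + 1 - k * (d + 1) = k + 1
    rw [show (d + 2) * k = k * (d + 1) + k by ring]
    omega
  have hprec : ∀ x ∈ Iic t \ Icc a t, ∀ y ∈ Icc a t, x ≤ y := by
    intro x hx y hy
    simp only [mem_sdiff, mem_Iic, mem_Icc] at hx hy
    exact (lt_of_not_ge fun hax => hx.2 ⟨hax, hx.1⟩).le.trans hy.1
  rw [hK]
  refine ciSup_le fun P => ?_
  obtain ⟨b, -, hb⟩ := exists_lt_card_fiber_of_mul_lt_card_of_maps_to (s := Iic t) (t := univ)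
    (f := P) (n := k) (fun _ _ => mem_univ _) (by simp [Fin.card_Iic, t])
  calc _ ≤ mms _ (d + 1) (univ.filter fun g => P g ≠ b) := iInf_le_mms_filter_ne _ _ P b
    _ = mms _ (d + 1) (univ \ univ.filter fun g => P g = b) := by rw [filter_not]
    _ ≤ _ := mms_sdiff_le_mms_sdiff_of_card_le hw hord Icc_subset_Iic_self hprec
      (by rwa [hcardK, inter_filter, inter_univ])
end
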